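/- arXiv:2009.09946 — 10 statements merged into one kernel-verified Lean document; each statement's English description precedes it below -/
import Mathlib

section
/- In a finite super-modular game with binary actions, if S ⊆ V is a sufficient control set, then every set T ⊆ V with S ⊆ T is also a sufficient control set. -/
open Finset

/-- The indicator strategy profile `𝟙_S` of a set of players `S`: action `1` (here `true`)
on `S` and `0` (here `false`) elsewhere. -/
def indicator {V : Type*} [DecidableEq V] (S : Finset V) : V → Bool :=
  fun i => decide (i ∈ S)

/-- A finite binary-action game with utilities `u` is super-modular (has increasing
differences) if for every player `i` and profiles `x, y` with `x_{-i} ≥ y_{-i}`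
componentwise, `u_i(1, x_{-i}) − u_i(0, x_{-i}) ≥ u_i(1, y_{-i}) − u_i(0, y_{-i})`. -/
def Supermodular {V : Type*} [DecidableEq V] (u : V → (V → Bool) → ℝ) : Prop :=
  ∀ (i : V) (x y : V → Bool), (∀ j, j ≠ i → y j ≤ x j) →
    u i (Function.update y i true) - u i (Function.update y i false) ≤
      u i (Function.update x i true) - u i (Function.update x i false)

/-- An improvement path from `S` to `T`: a sequence of profiles starting at `𝟙_S` and ending
at `𝟙_T` such that at each step some player `i ∉ S` flips her action (the profile changes
exactly in coordinate `i`) without decreasing her utility. -/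
def IsImprovementPath {V : Type*} [Fintype V] [DecidableEq V]
    (u : V → (V → Bool) → ℝ) (S T : Finset V) : Prop :=
  ∃ (m : ℕ) (x : ℕ → V → Bool),
    x 0 = indicator S ∧ x m = indicator T ∧
    ∀ k < m, ∃ i, i ∉ S ∧
      x (k + 1) = Function.update (x k) i (!(x k i)) ∧
      u i (x k) ≤ u i (x (k + 1))

/-- `S` is a sufficient control set if there is an improvement path from `S` to the whole
player set `V`. -/
def SufficientControlSet {V : Type*} [Fintype V] [DecidableEq V]
    (u : V → (V → Bool) → ℝ) (S : Finset V) : Prop :=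
  IsImprovementPath u S Finset.univ

/-- One improvement step where the moving player avoids `T`. -/
def GStep {V : Type*} [DecidableEq V] (u : V → (V → Bool) → ℝ) (T : Finset V)
    (z w : V → Bool) : Prop :=
  ∃ i, i ∉ T ∧ w = Function.update z i (!(z i)) ∧ u i z ≤ u i w

lemma path_of_rtg {V : Type*} [DecidableEq V] (u : V → (V → Bool) → ℝ) (T : Finset V)
    {a b : V → Bool} (h : Relation.ReflTransGen (GStep u T) a b) :
    ∃ (m : ℕ) (x : ℕ → V → Bool), x 0 = a ∧ x m = b ∧
      ∀ k < m, ∃ i, i ∉ T ∧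
        x (k + 1) = Function.update (x k) i (!(x k i)) ∧
        u i (x k) ≤ u i (x (k + 1)) := by
  induction h using Relation.ReflTransGen.head_induction_on with
  | refl => exact ⟨0, fun _ => b, rfl, rfl, fun k hk => absurd hk (Nat.not_lt_zero k)⟩
  | head hst _ ih =>
    rename_i a c _
    obtain ⟨m, x, hx0, hxm, hstep⟩ := ih
    refine ⟨m + 1, fun k => if k = 0 then a else x (k - 1), by simp, by simp [hxm], ?_⟩
    intro k hk
    rcases Nat.eq_zero_or_pos k with rfl | hkpos
    · obtain ⟨i, hiT, hw, hui⟩ := hst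
      exact ⟨i, hiT, by simpa [hx0] using hw, by simpa [hx0] using hui⟩
    · obtain ⟨i, hiT, hw, hui⟩ := hstep (k - 1) (by omega)
      have h1 : k + 1 - 1 = (k - 1) + 1 := by omega
      refine ⟨i, hiT, ?_, ?_⟩
      · simp only [if_neg (by omega : ¬ k + 1 = 0), if_neg (by omega : ¬ k = 0), h1]
        exact hw
      · simp only [if_neg (by omega : ¬ k + 1 = 0), if_neg (by omega : ¬ k = 0), h1]
        exact hui

/-- In a finite super-modular game with binary actions, if `S ⊆ V` is a sufficient control
set, then every `T ⊆ V` with `S ⊆ T` is also a sufficient control set. -/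
theorem sufficient_of_superset
    {V : Type*} [Fintype V] [DecidableEq V]
    (u : V → (V → Bool) → ℝ) (hu : Supermodular u) (S T : Finset V)
    (hS : SufficientControlSet u S) (hST : S ⊆ T) :
    SufficientControlSet u T := by
  obtain ⟨m, x, hx0, hxm, hstep⟩ := hS
  -- Invariant: for every k ≤ m there is U ⊇ T with 𝟙_U ≥ x k reachable from 𝟙_T.
  have key : ∀ k ≤ m, ∃ U : Finset V, T ⊆ U ∧ (∀ j, x k j = true → j ∈ U) ∧
      Relation.ReflTransGen (GStep u T) (indicator T) (indicator U) := by
    intro k hk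
    induction k with
    | zero =>
      refine ⟨T, le_refl _, ?_, Relation.ReflTransGen.refl⟩
      intro j hj
      rw [hx0] at hj
      simp only [indicator, decide_eq_true_eq] at hj
      exact hST hj
    | succ k ih =>
      obtain ⟨U, hTU, hU, hrtg⟩ := ih (by omega)
      obtain ⟨i, hiS, hw, hui⟩ := hstep k (by omega)
      cases hxi : x k i with
      | true =>
        refine ⟨U, hTU, ?_, hrtg⟩
        intro j hj
        rcases eq_or_ne j i with rfl | hne
        · rw [hw] at hj; simp [hxi] at hj
        · rw [hw, Function.update_of_ne hne] at hj
          exact hU j hj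
      | false =>
        by_cases hiU : i ∈ U
        · refine ⟨U, hTU, ?_, hrtg⟩
          intro j hj
          rcases eq_or_ne j i with rfl | hne
          · exact hiU
          · rw [hw, Function.update_of_ne hne] at hj
            exact hU j hj
        · -- Flip i up at 𝟙_U, using supermodularity.
          have hiT : i ∉ T := fun h => hiU (hTU h)
          have hUi : indicator U i = false := by
            simp [indicator, hiU]
          have hupd1 : Function.update (x k) i false = x k := by
            funext j; rcases eq_or_ne j i with rfl | hne
            · simp [hxi]
            · simp [Function.update_of_ne hne]
          have hupd2 : Function.update (x k) i true = x (k + 1) := by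
            rw [hw, hxi]; rfl
          have hupd3 : Function.update (indicator U) i false = indicator U := by
            funext j; rcases eq_or_ne j i with rfl | hne
            · simp [hUi]
            · simp [Function.update_of_ne hne]
          have hupd4 : Function.update (indicator U) i true = indicator (insert i U) := by
            funext j; rcases eq_or_ne j i with rfl | hne
            · simp [indicator]
            · simp [Function.update_of_ne hne, indicator, hne]
          have hmono : ∀ j, j ≠ i → x k j ≤ indicator U j := by
            intro j _
            cases hxj : x k j with
            | false => exact Bool.false_le _
            | true =>
              have := hU j hxj
              simp [indicator, this]
          have hsm := hu i (indicator U) (x k) hmono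
          rw [hupd1, hupd2, hupd3, hupd4] at hsm
          have himp : u i (indicator U) ≤ u i (indicator (insert i U)) := by
            have h0 : (0 : ℝ) ≤ u i (x (k + 1)) - u i (x k) := by linarith
            linarith
          have hstep' : GStep u T (indicator U) (indicator (insert i U)) := by
            refine ⟨i, hiT, ?_, himp⟩
            rw [hUi, ← hupd4]
            rfl
          refine ⟨insert i U, hTU.trans (subset_insert i U), ?_, hrtg.tail hstep'⟩
          intro j hj
          rcases eq_or_ne j i with rfl | hne
          · exact mem_insert_self _ _
          · rw [hw, Function.update_of_ne hne] at hj
            exact mem_insert_of_mem (hU j hj)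
  obtain ⟨U, _, hU, hrtg⟩ := key m le_rfl
  have hUuniv : U = Finset.univ := by
    apply Finset.eq_univ_of_forall
    intro j
    apply hU
    rw [hxm]; simp [indicator]
  rw [hUuniv] at hrtg
  exact path_of_rtg u T hrtg
end

section
/- Let G = (V, E, W) be a finite weighted directed graph with no self-loops and no sinks, and consider the network coordination game on G in which every player has the same threshold θ ∈ [0,1]. Then S ⊆ V is a sufficient control set if and only if V \ S is uniformly no more than (1−θ)-cohesive, i.e., no subset S′ ⊆ V \ S is θ′-cohesive for some θ′ > 1−θ. -/
open Finset

/-- Utilities of the network coordination game on the weighted directed graph with weight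
matrix `W` and thresholds `θ`, normalized so that `u_i(0, x_{-i}) = 0`.  With this choice,
switching from `0` to `1` (resp. from `1` to `0`) does not decrease player `i`'s utility
exactly when `(Σ_{j≠i} W_{ij} x_j)/w_i ≥ θ_i` (resp. `≤ θ_i`), reproducing the best
responses of the network coordination game. -/
def coordU {V : Type*} [Fintype V] [DecidableEq V] (W : V → V → ℝ) (θ : V → ℝ) :
    V → (V → Bool) → ℝ :=
  fun i x =>
    if x i then
      (∑ j ∈ Finset.univ.erase i, W i j * (if x j then 1 else 0))
        - θ i * (∑ j ∈ Finset.univ.erase i, W i j)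
    else 0

/-- A subset `S` is `α`-cohesive in the weighted graph `W` if `Σ_{j∈S} W_{ij} ≥ α·w_i`
for every `i ∈ S`, where `w_i = Σ_{j≠i} W_{ij}` is the out-degree of `i`. -/
def Cohesive {V : Type*} [Fintype V] [DecidableEq V] (W : V → V → ℝ) (α : ℝ)
    (S : Finset V) : Prop :=
  ∀ i ∈ S, α * (∑ j ∈ Finset.univ.erase i, W i j) ≤ ∑ j ∈ S, W i j

section Aux

variable {V : Type*} [Fintype V] [DecidableEq V]

/-- Summing weights against an indicator profile. -/
lemma sum_ind (W : V → V → ℝ) (hdiag : ∀ i, W i i = 0) (T : Finset V) (i : V) :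
    ∑ j ∈ Finset.univ.erase i, W i j * (if indicator T j then 1 else 0)
      = ∑ j ∈ T, W i j := by
  have h1 : ∀ j ∈ Finset.univ.erase i,
      W i j * (if indicator T j then 1 else 0) = if j ∈ T then W i j else 0 := by
    intro j _
    by_cases hj : j ∈ T <;> simp [indicator, hj]
  rw [Finset.sum_congr rfl h1, Finset.sum_ite_mem]
  have h2 : Finset.univ.erase i ∩ T = T.erase i := by
    ext j; simp [Finset.mem_erase, and_comm]
  rw [h2, Finset.sum_erase _ (hdiag i)]

/-- Total weight identity: `∑_{j∈T} W i j + ∑_{j∉T} W i j = w_i`. -/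
lemma sum_split (W : V → V → ℝ) (hdiag : ∀ i, W i i = 0) (T : Finset V) (i : V) :
    ∑ j ∈ Finset.univ \ T, W i j + ∑ j ∈ T, W i j
      = ∑ j ∈ Finset.univ.erase i, W i j := by
  rw [Finset.sum_sdiff (Finset.subset_univ T), Finset.sum_erase _ (hdiag i)]

/-- Bound on the weighted sum against a profile that vanishes on `S'` (with `i ∈ S'`). -/
lemma sum_bound (W : V → V → ℝ) (hW : ∀ i j, 0 ≤ W i j) (hdiag : ∀ i, W i i = 0)
    (x : V → Bool) (S' : Finset V) (i : V) (hi : i ∈ S')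
    (hfalse : ∀ j ∈ S', x j = false) :
    ∑ j ∈ Finset.univ.erase i, W i j * (if x j then 1 else 0)
      ≤ ∑ j ∈ Finset.univ.erase i, W i j - ∑ j ∈ S', W i j := by
  have h1 : ∑ j ∈ Finset.univ.erase i, W i j * (if x j then 1 else 0)
      ≤ ∑ j ∈ Finset.univ.erase i, (if j ∈ S' then 0 else W i j) := by
    refine Finset.sum_le_sum fun j _ => ?_
    by_cases hj : j ∈ S'
    · simp [hj, hfalse j hj]
    · simp only [hj, if_neg, ite_false]
      by_cases hx : x j <;> simp [hx, hW i j]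
  refine h1.trans_eq ?_
  have h2 : ∀ j ∈ Finset.univ.erase i,
      (if j ∈ S' then (0:ℝ) else W i j) = W i j - (if j ∈ S' then W i j else 0) := by
    intro j _; by_cases hj : j ∈ S' <;> simp [hj]
  have h3 : Finset.univ.erase i ∩ S' = S'.erase i := by
    ext j; simp [Finset.mem_erase, and_comm]
  have h4 : ∑ j ∈ Finset.univ.erase i, (if j ∈ S' then W i j else 0) = ∑ j ∈ S', W i j := by
    rw [Finset.sum_ite_mem, h3]; exact Finset.sum_erase _ (hdiag i)
  rw [Finset.sum_congr rfl h2, Finset.sum_sub_distrib, h4]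

/-- Forward construction: from any superstate `T ⊇ S`, if the complement of `S` has no
overly cohesive subset, there is an improvement path from `indicator T` to all-ones. -/
lemma build (W : V → V → ℝ) (hW : ∀ i j, 0 ≤ W i j) (hdiag : ∀ i, W i i = 0)
    (hsink : ∀ i, 0 < ∑ j ∈ Finset.univ.erase i, W i j)
    (θ : ℝ) (S : Finset V)
    (H : ∀ S' ⊆ Finset.univ \ S, S'.Nonempty → ¬ ∃ θ' > 1 - θ, Cohesive W θ' S') :
    ∀ (n : ℕ) (T : Finset V), S ⊆ T → (Finset.univ \ T).card = n →
    ∃ (m : ℕ) (x : ℕ → V → Bool),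
      x 0 = indicator T ∧ x m = indicator Finset.univ ∧
      ∀ k < m, ∃ i, i ∉ S ∧
        x (k + 1) = Function.update (x k) i (!(x k i)) ∧
        coordU W (fun _ => θ) i (x k) ≤ coordU W (fun _ => θ) i (x (k + 1)) := by
  intro n
  induction n with
  | zero =>
    intro T _ hcard
    have hT : T = Finset.univ := by
      have := Finset.card_eq_zero.mp hcard
      exact Finset.univ_subset_iff.mp (Finset.sdiff_eq_empty_iff_subset.mp this)
    exact ⟨0, fun _ => indicator T, rfl, by rw [hT], fun k hk => absurd hk (Nat.not_lt_zero k)⟩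
  | succ n ih =>
    intro T hST hcard
    set A := Finset.univ \ T with hA
    have hAne : A.Nonempty := Finset.card_pos.mp (by rw [hcard]; exact Nat.succ_pos n)
    -- find i ∈ A with ∑_{j∈A} W i j ≤ (1-θ) w_i
    have hex : ∃ i ∈ A, ∑ j ∈ A, W i j ≤ (1 - θ) * ∑ j ∈ Finset.univ.erase i, W i j := by
      by_contra hcon
      push_neg at hcon
      obtain ⟨i0, hi0, hmin⟩ := Finset.exists_min_image A
        (fun i => (∑ j ∈ A, W i j) / ∑ j ∈ Finset.univ.erase i, W i j) hAne
      have hASub : A ⊆ Finset.univ \ S := Finset.sdiff_subset_sdiff le_rfl hST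
      refine H A hASub hAne ⟨(∑ j ∈ A, W i0 j) / ∑ j ∈ Finset.univ.erase i0, W i0 j, ?_, ?_⟩
      · rw [gt_iff_lt, lt_div_iff₀ (hsink i0)]
        exact hcon i0 hi0
      · intro i hi
        have h1 := hmin i hi
        have h2 : (∑ j ∈ A, W i0 j) / (∑ j ∈ Finset.univ.erase i0, W i0 j)
            * (∑ j ∈ Finset.univ.erase i, W i j)
            ≤ (∑ j ∈ A, W i j) / (∑ j ∈ Finset.univ.erase i, W i j)
            * (∑ j ∈ Finset.univ.erase i, W i j) :=
          mul_le_mul_of_nonneg_right h1 (le_of_lt (hsink i))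
        rwa [div_mul_cancel₀ _ (ne_of_gt (hsink i))] at h2
    obtain ⟨i, hiA, hile⟩ := hex
    have hiT : i ∉ T := (Finset.mem_sdiff.mp hiA).2
    have hiS : i ∉ S := fun h => hiT (hST h)
    -- induction for insert i T
    have hcard' : (Finset.univ \ insert i T).card = n := by
      have heq : Finset.univ \ insert i T = A.erase i := by
        ext j
        simp only [hA, Finset.mem_sdiff, Finset.mem_erase, Finset.mem_insert,
          Finset.mem_univ, true_and]
        tauto
      rw [heq, Finset.card_erase_of_mem hiA, hcard]
      omega
    obtain ⟨m', x', hx0', hxm', hstep'⟩ :=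
      ih (insert i T) (hST.trans (Finset.subset_insert i T)) hcard'
    refine ⟨m' + 1, fun k => Nat.casesOn k (indicator T) x', rfl, hxm', ?_⟩
    intro k hk
    cases k with
    | zero =>
      refine ⟨i, hiS, ?_, ?_⟩
      · show x' 0 = _
        rw [hx0']
        have hxi : indicator T i = false := by simp [indicator, hiT]
        funext j
        by_cases hj : j = i
        · subst hj; simp [Function.update, indicator, hxi, hiT]
        · simp [Function.update, hj, indicator, Finset.mem_insert]
      · show coordU W (fun _ => θ) i (indicator T) ≤ coordU W (fun _ => θ) i (x' 0)
        rw [hx0']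
        have hxi : indicator T i = false := by simp [indicator, hiT]
        have hxi' : indicator (insert i T) i = true := by simp [indicator]
        rw [coordU, coordU]
        simp only [hxi, hxi', if_false, if_true, Bool.false_eq_true]
        rw [sum_ind W hdiag (insert i T) i]
        have hins : ∑ j ∈ insert i T, W i j = ∑ j ∈ T, W i j := by
          rw [Finset.sum_insert hiT, hdiag i, zero_add]
        rw [hins]
        have hsplit := sum_split W hdiag T i
        nlinarith [hsink i]
    | succ k =>
      obtain ⟨p, hp1, hp2, hp3⟩ := hstep' k (Nat.lt_of_succ_lt_succ hk)
      exact ⟨p, hp1, hp2, hp3⟩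

end Aux

/-- For the network coordination game on a finite weighted directed graph with no
self-loops and no sinks in which every player has the same threshold `θ ∈ [0,1]`,
`S` is a sufficient control set if and only if `V \ S` is uniformly no more than
`(1−θ)`-cohesive, i.e. no nonempty subset `S' ⊆ V \ S` is `θ'`-cohesive for some
`θ' > 1 − θ`. -/
theorem sufficient_iff_uniformly_no_more_cohesive
    {V : Type*} [Fintype V] [DecidableEq V]
    (W : V → V → ℝ) (hW : ∀ i j, 0 ≤ W i j) (hdiag : ∀ i, W i i = 0)
    (hsink : ∀ i, 0 < ∑ j ∈ Finset.univ.erase i, W i j)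
    (θ : ℝ) (hθ : θ ∈ Set.Icc (0 : ℝ) 1) (S : Finset V) :
    SufficientControlSet (coordU W (fun _ => θ)) S ↔
      ∀ S' ⊆ Finset.univ \ S, S'.Nonempty → ¬ ∃ θ' > 1 - θ, Cohesive W θ' S' := by
  constructor
  · rintro ⟨m, x, h0, hm, hstep⟩ S' hS' hS'ne ⟨θ', hθ', hcoh⟩
    have key : ∀ k ≤ m, ∀ i ∈ S', x k i = false := by
      intro k
      induction k with
      | zero =>
        intro _ i hi
        have hiS : i ∉ S := (Finset.mem_sdiff.mp (hS' hi)).2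
        rw [h0]; simp [indicator, hiS]
      | succ k ih =>
        intro hk i hi
        have hk' : k ≤ m := Nat.le_of_succ_le hk
        obtain ⟨p, _, hxs, hu⟩ := hstep k (Nat.lt_of_succ_le hk)
        by_cases hip : i = p
        · subst hip
          exfalso
          have hxf : x k i = false := ih hk' i hi
          rw [hxs] at hu
          rw [coordU, coordU, hxf] at hu
          simp only [Function.update_self, Bool.not_false, if_true, Bool.false_eq_true,
            if_false] at hu
          -- hu : 0 ≤ ∑ ... - θ * w_i
          have hsum : ∑ j ∈ Finset.univ.erase i, W i j *
              (if Function.update (x k) i true j then 1 else 0)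
              = ∑ j ∈ Finset.univ.erase i, W i j * (if x k j then 1 else 0) := by
            refine Finset.sum_congr rfl fun j hj => ?_
            rw [Function.update_of_ne (Finset.ne_of_mem_erase hj)]
          rw [hsum] at hu
          have hb := sum_bound W hW hdiag (x k) S' i hi (fun j hj => ih hk' j hj)
          have hc := hcoh i hi
          have hw := hsink i
          have hθ'' : (1 - θ) * (∑ j ∈ Finset.univ.erase i, W i j)
              < θ' * (∑ j ∈ Finset.univ.erase i, W i j) :=
            mul_lt_mul_of_pos_right hθ' hw
          linarith
        · rw [hxs, Function.update_of_ne hip]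
          exact ih hk' i hi
    obtain ⟨i, hi⟩ := hS'ne
    have h := key m le_rfl i hi
    rw [hm] at h
    simp [indicator] at h
  · intro H
    obtain ⟨m, x, h0, hm, hstep⟩ :=
      build W hW hdiag hsink θ S H (Finset.univ \ S).card S (le_refl S) rfl
    exact ⟨m, x, h0, hm, hstep⟩
end

section
/- Consider the majority game on the complete simple graph with n ≥ 2 nodes. Every subset of players of cardinality ⌊n/2⌋ is a sufficient control set. -/
open Finset

/-- Utilities of the majority game on a finite simple undirected graph `G`: the utility of
player `i` at profile `x` is the number of neighbors `j` of `i` with `x_j = x_i`. -/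
def majU {V : Type*} [Fintype V] [DecidableEq V] (G : SimpleGraph V) [DecidableRel G.Adj] :
    V → (V → Bool) → ℝ :=
  fun i x => ((G.neighborFinset i).filter (fun j => x j = x i)).card

lemma neighborFinset_top' {V : Type*} [Fintype V] [DecidableEq V] (v : V) :
    (⊤ : SimpleGraph V).neighborFinset v = Finset.univ.erase v := by
  ext j
  simp [SimpleGraph.mem_neighborFinset, ne_comm]

lemma indicator_insert {V : Type*} [DecidableEq V] (T : Finset V) (i : V) (hi : i ∉ T) :
    indicator (insert i T) = Function.update (indicator T) i (!(indicator T i)) := by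
  funext j
  by_cases h : j = i
  · subst h; simp [indicator, Function.update, hi]
  · simp [indicator, Function.update, h]

lemma path_extend {V : Type*} [Fintype V] [DecidableEq V]
    (u : V → (V → Bool) → ℝ) (S T : Finset V) (i : V) (hiT : i ∉ T) (hiS : i ∉ S)
    (hu : u i (indicator T) ≤ u i (indicator (insert i T)))
    (hp : IsImprovementPath u S T) : IsImprovementPath u S (insert i T) := by
  obtain ⟨m, x, h0, hm, hstep⟩ := hp
  refine ⟨m + 1, fun k => if k ≤ m then x k else indicator (insert i T), by simpa using h0,
    by simp, ?_⟩
  intro k hk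
  rcases lt_or_eq_of_le (Nat.lt_succ_iff.mp hk) with hk' | hk'
  · obtain ⟨j, hj, hupd, huj⟩ := hstep k hk'
    exact ⟨j, hj, by simpa [hk'.le, Nat.succ_le_of_lt hk'] using hupd,
      by simpa [hk'.le, Nat.succ_le_of_lt hk'] using huj⟩
  · subst hk'
    refine ⟨i, hiS, ?_, ?_⟩
    · simp [hm, indicator_insert T i hiT]
    · simpa [hm] using hu

lemma majU_step {V : Type*} [Fintype V] [DecidableEq V] (n : ℕ)
    (hcard : Fintype.card V = n) (T : Finset V) (i : V) (hiT : i ∉ T)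
    (hT : n / 2 ≤ T.card) :
    majU (⊤ : SimpleGraph V) i (indicator T) ≤
      majU (⊤ : SimpleGraph V) i (indicator (insert i T)) := by
  have h1 : ((⊤ : SimpleGraph V).neighborFinset i).filter
      (fun j => indicator T j = indicator T i) = Tᶜ.erase i := by
    ext j
    simp [neighborFinset_top', indicator, hiT, and_comm]
  have h2 : ((⊤ : SimpleGraph V).neighborFinset i).filter
      (fun j => indicator (insert i T) j = indicator (insert i T) i) = T := by
    ext j
    by_cases hji : j = i
    · subst hji; simp [neighborFinset_top', hiT]
    · simp [neighborFinset_top', indicator, hji, Finset.mem_insert]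
  rw [majU, majU, h1, h2]
  have hc : Tᶜ.card = n - T.card := by
    rw [Finset.card_compl, hcard]
  have hTn : T.card ≤ n := hcard ▸ Finset.card_le_univ T
  have : (Tᶜ.erase i).card ≤ T.card := by
    have hi' : i ∈ Tᶜ := Finset.mem_compl.mpr hiT
    have := Finset.card_erase_of_mem hi'
    omega
  exact_mod_cast this

/-- For the majority game on the complete simple graph with `n ≥ 2` nodes, every subset of
players of cardinality `⌊n/2⌋` is a sufficient control set. -/
theorem complete_graph_half_sufficient
    {V : Type*} [Fintype V] [DecidableEq V] (n : ℕ) (hn : 2 ≤ n)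
    (hcard : Fintype.card V = n) (S : Finset V) (hS : S.card = n / 2) :
    SufficientControlSet (majU (⊤ : SimpleGraph V)) S := by
  have key : ∀ k (T : Finset V), S ⊆ T → Tᶜ.card = k →
      IsImprovementPath (majU (⊤ : SimpleGraph V)) S T →
      IsImprovementPath (majU (⊤ : SimpleGraph V)) S Finset.univ := by
    intro k
    induction k with
    | zero =>
      intro T _ hTc hp
      have hTe : Tᶜ = ∅ := Finset.card_eq_zero.mp hTc
      rw [Finset.compl_eq_empty_iff] at hTe
      exact hTe ▸ hp
    | succ k ih =>
      intro T hST hTc hp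
      obtain ⟨i, hi⟩ := Finset.card_pos.mp (by omega : 0 < Tᶜ.card)
      have hiT : i ∉ T := Finset.mem_compl.mp hi
      have hiS : i ∉ S := fun h => hiT (hST h)
      have hT2 : n / 2 ≤ T.card := hS ▸ Finset.card_le_card hST
      refine ih (insert i T) (hST.trans (Finset.subset_insert i T)) ?_
        (path_extend _ S T i hiT hiS (majU_step n hcard T i hiT hT2) hp)
      rw [Finset.compl_insert, Finset.card_erase_of_mem hi]
      omega
  refine key Sᶜ.card S (le_refl S) rfl ⟨0, fun _ => indicator S, rfl, rfl, by omega⟩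
end

section
/- Let G be a finite simple connected undirected graph with at least 2 nodes in which every node has degree at most 2. Then for the majority game on G, every singleton set {v} is a sufficient control set. -/
/-! A vertex outside the current set `T` of `1`-players that has a neighbour in `T` has at most one
other neighbour, so switching to `1` gives it at least as many agreeing neighbours as before
(a tie at worst). Connectivity always provides such a vertex while `T ≠ V`, so starting from
`T = {v}` the action `1` spreads, one vertex at a time, over the whole graph. -/

open Finset

open Relation

theorem exists_seq_of_reflTransGen {α : Type*} {r : α → α → Prop} {a b : α}
    (h : ReflTransGen r a b) :
    ∃ (m : ℕ) (x : ℕ → α), x 0 = a ∧ x m = b ∧ ∀ k < m, r (x k) (x (k + 1)) := by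
  induction h using ReflTransGen.head_induction_on with
  | refl => exact ⟨0, fun _ => b, rfl, rfl, fun k hk => absurd hk k.not_lt_zero⟩
  | head hac _ ih =>
    obtain ⟨m, x, hx0, hxm, hx⟩ := ih
    refine ⟨m + 1, fun | 0 => _ | k + 1 => x k, rfl, hxm, ?_⟩
    rintro (_ | k) hk
    · simpa [hx0] using hac
    · exact hx k (by omega)

theorem update_indicator_true {V : Type*} [DecidableEq V] (T : Finset V) (i : V) :
    Function.update (indicator T) i true = indicator (insert i T) := by
  funext j
  by_cases h : j = i <;> simp [indicator, Function.update, h]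

section ImprovementPath

variable {V : Type*} [Fintype V] [DecidableEq V]

def ImprovementStep (u : V → (V → Bool) → ℝ) (S : Finset V) (x y : V → Bool) : Prop :=
  ∃ i ∉ S, y = Function.update x i (!x i) ∧ u i x ≤ u i y

theorem isImprovementPath_of_reflTransGen {u : V → (V → Bool) → ℝ} {S T : Finset V}
    (h : ReflTransGen (ImprovementStep u S) (indicator S) (indicator T)) :
    IsImprovementPath u S T :=
  exists_seq_of_reflTransGen h

theorem reflTransGen_indicator_univ {u : V → (V → Bool) → ℝ} {S : Finset V}
    (hgrow : ∀ T, S ⊆ T → T ≠ univ →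
      ∃ i ∉ T, u i (indicator T) ≤ u i (indicator (insert i T)))
    (T : Finset V) (hST : S ⊆ T) :
    ReflTransGen (ImprovementStep u S) (indicator T) (indicator univ) := by
  by_cases hT : T = univ
  · rw [hT]
  obtain ⟨i, hiT, hi⟩ := hgrow T hST hT
  have hstep : ImprovementStep u S (indicator T) (indicator (insert i T)) := by
    have hupdate :
        Function.update (indicator T) i (!indicator T i) = indicator (insert i T) := by
      simpa [indicator, hiT] using update_indicator_true T i
    exact ⟨i, fun hiS => hiT (hST hiS), hupdate.symm, hi⟩
  have : #(Tᶜ.erase i) < #Tᶜ := card_erase_lt_of_mem (mem_compl.mpr hiT)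
  exact .head hstep (reflTransGen_indicator_univ hgrow _ (hST.trans (subset_insert i T)))
termination_by #Tᶜ

theorem sufficientControlSet_of_forall_exists_improving_insert
    {u : V → (V → Bool) → ℝ} {S : Finset V}
    (hgrow : ∀ T, S ⊆ T → T ≠ univ →
      ∃ i ∉ T, u i (indicator T) ≤ u i (indicator (insert i T))) :
    SufficientControlSet u S :=
  isImprovementPath_of_reflTransGen (reflTransGen_indicator_univ hgrow S subset_rfl)

end ImprovementPath

section MajorityGame

variable {V : Type*} [Fintype V] [DecidableEq V] (G : SimpleGraph V) [DecidableRel G.Adj]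

theorem majU_indicator_of_notMem {T : Finset V} {i : V} (hi : i ∉ T) :
    majU G i (indicator T) = #{j ∈ G.neighborFinset i | j ∉ T} := by
  simp [majU, indicator, hi]

theorem majU_indicator_insert_self (T : Finset V) (i : V) :
    majU G i (indicator (insert i T)) = #{j ∈ G.neighborFinset i | j ∈ T} := by
  unfold majU
  congr 2
  refine filter_congr fun j hj => ?_
  have hji : j ≠ i := (G.ne_of_adj ((G.mem_neighborFinset i j).mp hj)).symm
  simp [indicator, hji]

theorem majU_indicator_le_insert_of_degree_le_two {T : Finset V} {i j : V}
    (hiT : i ∉ T) (hjT : j ∈ T) (hadj : G.Adj i j) (hdeg : G.degree i ≤ 2) :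
    majU G i (indicator T) ≤ majU G i (indicator (insert i T)) := by
  rw [majU_indicator_of_notMem G hiT, majU_indicator_insert_self]
  have hin : 0 < #{j ∈ G.neighborFinset i | j ∈ T} :=
    card_pos.mpr ⟨j, mem_filter.mpr ⟨(G.mem_neighborFinset i j).mpr hadj, hjT⟩⟩
  have hsplit := card_filter_add_card_filter_not (s := G.neighborFinset i) (· ∈ T)
  rw [G.card_neighborFinset_eq_degree] at hsplit
  have : #{j ∈ G.neighborFinset i | j ∉ T} ≤ #{j ∈ G.neighborFinset i | j ∈ T} := by omega
  exact_mod_cast this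

end MajorityGame

theorem SimpleGraph.Connected.exists_adj_of_nonempty_of_ne_univ {V : Type*} [Fintype V]
    {G : SimpleGraph V} (hconn : G.Connected) {T : Finset V} (hT : T.Nonempty)
    (hTuniv : T ≠ univ) : ∃ i ∉ T, ∃ j ∈ T, G.Adj i j := by
  obtain ⟨a, ha⟩ := hT
  obtain ⟨b, hb⟩ : ∃ b, b ∉ T := by simpa [eq_univ_iff_forall] using hTuniv
  obtain ⟨d, -, hd₁, hd₂⟩ :=
    (hconn a b).some.exists_boundary_dart (T : Set V) ha (by simpa using hb)
  exact ⟨d.snd, hd₂, d.fst, hd₁, d.adj.symm⟩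

theorem degree_le_two_singleton_sufficient_general
    {V : Type*} [Fintype V] [DecidableEq V]
    (G : SimpleGraph V) [DecidableRel G.Adj]
    (hconn : G.Connected)
    (hdeg : ∀ v : V, G.degree v ≤ 2) (v : V) :
    SufficientControlSet (majU G) {v} := by
  refine sufficientControlSet_of_forall_exists_improving_insert fun T hvT hT => ?_
  obtain ⟨i, hiT, j, hjT, hadj⟩ :=
    hconn.exists_adj_of_nonempty_of_ne_univ ⟨v, singleton_subset_iff.mp hvT⟩ hT
  exact ⟨i, hiT, majU_indicator_le_insert_of_degree_le_two G hiT hjT hadj (hdeg i)⟩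

/-- For the majority game on a finite simple connected undirected graph with at least two
nodes in which every node has degree at most `2`, every singleton set `{v}` is a
sufficient control set. -/
theorem degree_le_two_singleton_sufficient
    {V : Type*} [Fintype V] [DecidableEq V]
    (G : SimpleGraph V) [DecidableRel G.Adj]
    (hconn : G.Connected) (hcard : 2 ≤ Fintype.card V)
    (hdeg : ∀ v : V, G.degree v ≤ 2) (v : V) :
    SufficientControlSet (majU G) {v} :=
  degree_le_two_singleton_sufficient_general G hconn hdeg v
end

section
/- Let I = (X, C) be a 3-SAT instance with variables X = {x_1,…,x_{s−1}} and clauses C = {c_1,…,c_m}, each clause containing exactly three literals, and let G_I be the associated graph described below. If the majority game on G_I admits a sufficient control set of size s, then I is satisfiable. -/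
open Finset

/-- The node set of the graph `G_I` associated to a 3-SAT instance with `v` variables and
`m` clauses: clause nodes `w_j`, variable nodes `y_i` (encoding `x_i` true) and
`ybar_i` (encoding `x_i` false), a tie-breaking node `z`, a set `L` of `3m` leaves
(one for each literal occurrence, indexed by a clause and a literal slot), and a set `M`
of `m+1` leaves. -/
inductive SatNode (v m : ℕ) where
  | w : Fin m → SatNode v m
  | y : Fin v → SatNode v m
  | ybar : Fin v → SatNode v m
  | z : SatNode v m
  | leafL : Fin m → Fin 3 → SatNode v m
  | leafM : Fin (m + 1) → SatNode v m
  deriving DecidableEq, Fintype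

/-- The variable node encoding the `t`-th literal of clause `j`: `y_i` if the literal is
`x_i`, and `ybar_i` if the literal is `¬x_i`.  Here a clause is a function
`c j : Fin 3 → Fin v × Bool`, the literal `(i, true)` standing for `x_i` and `(i, false)`
for `¬x_i`. -/
def litNode {v m : ℕ} (c : Fin m → Fin 3 → Fin v × Bool) (j : Fin m) (t : Fin 3) :
    SatNode v m :=
  if (c j t).2 then SatNode.y (c j t).1 else SatNode.ybar (c j t).1

/-- One-directional description of the edges of `G_I`: (1) `w_j` is adjacent to `y_i` iff
`x_i` appears in clause `c_j` and to `ybar_i` iff `¬x_i` appears in `c_j`; (2) the leaf of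
`L` indexed by `(j,t)` is adjacent exactly to the variable node encoding the `t`-th
literal of clause `j`; (3) `z` is adjacent to every node of `W` and every node of `M`;
(4) `y_i` is adjacent to `ybar_i`. -/
def satBase {v m : ℕ} (c : Fin m → Fin 3 → Fin v × Bool) :
    SatNode v m → SatNode v m → Bool
  | .w j, .y i => decide (∃ t, c j t = (i, true))
  | .w j, .ybar i => decide (∃ t, c j t = (i, false))
  | .y i, .ybar i' => decide (i = i')
  | .z, .w _ => true
  | .z, .leafM _ => true
  | .leafL j t, a => decide (litNode c j t = a)
  | _, _ => false

/-- The simple graph `G_I` associated to a 3-SAT instance: the symmetrization of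
`satBase`. -/
def satGraph {v m : ℕ} (c : Fin m → Fin 3 → Fin v × Bool) : SimpleGraph (SatNode v m) where
  Adj a b := a ≠ b ∧ (satBase c a b = true ∨ satBase c b a = true)
  symm := ⟨fun _ _ h => ⟨h.1.symm, h.2.symm⟩⟩
  loopless := ⟨fun _ h => h.1 rfl⟩

instance {v m : ℕ} (c : Fin m → Fin 3 → Fin v × Bool) :
    DecidableRel (satGraph c).Adj :=
  fun _ _ => inferInstanceAs (Decidable (_ ∧ _))

/-- The control set associated to an assignment `σ` of the variables: the node `z`,
the nodes `y_i` for variables with `σ_i` true and the nodes `ybar_i` for variables with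
`σ_i` false. -/
def ctrlPred {v m : ℕ} (σ : Fin v → Bool) : SatNode v m → Bool
  | .z => true
  | .y i => σ i
  | .ybar i => !σ i
  | _ => false

/-!
Along an improvement path from `S` to `V`, let `τ a` be the first time at which node `a` plays
`1`. A node outside `S` switches to `1` only when at least half of its neighbours already play
`1`, so at least half of its neighbours have smaller `τ`. In `G_I` this forces `S` to meet
`{z} ∪ M` (`z` needs one of its `m + 1` leaves before it, and a leaf needs `z`) and, for every
variable `i`, the gadget formed by `y_i`, `ȳ_i` and their leaves (the first node of the gadget
to switch would lack support). As `|S| = s`, each of these `s` disjoint sets contains exactly one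
node of `S`, and no clause node is in `S`. A clause node needs two of its four neighbours, hence
a literal node, before it; and a literal node that precedes one of its clause nodes also precedes
its complement, since otherwise it, or its complement, would lack support. So setting `x_i` true
iff `y_i` precedes `ȳ_i` satisfies every clause.
-/

section Schedule

variable {V : Type*} [Fintype V] {G : SimpleGraph V} [DecidableRel G.Adj]
  {S : Finset V} {τ : V → ℕ} {a : V}

structure IsActivationSchedule (G : SimpleGraph V) [DecidableRel G.Adj] (S : Finset V)
    (τ : V → ℕ) : Prop where
  eq_zero_iff : ∀ a, τ a = 0 ↔ a ∈ S
  degree_le : ∀ a ∉ S, G.degree a ≤ 2 * #{b ∈ G.neighborFinset a | τ b < τ a}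

lemma degree_le_two_mul_card_of_majU_le [DecidableEq V] {x : V → Bool} {i : V}
    (hxi : x i = false)
    (h : majU G i x ≤ majU G i (Function.update x i true)) :
    G.degree i ≤ 2 * #{j ∈ G.neighborFinset i | x j = true} := by
  have hfalse : majU G i x = #{j ∈ G.neighborFinset i | x j = false} := by
    simp only [majU, hxi]
  have htrue : majU G i (Function.update x i true) = #{j ∈ G.neighborFinset i | x j = true} := by
    simp only [majU, Function.update_self]
    congr 2
    refine filter_congr fun j hj => ?_
    rw [Function.update_of_ne ((G.mem_neighborFinset i j).mp hj).ne']
  have hsplit := card_filter_add_card_filter_not (s := G.neighborFinset i)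
    (fun j => x j = true)
  simp only [Bool.not_eq_true] at hsplit
  rw [hfalse, htrue, Nat.cast_le] at h
  rw [← G.card_neighborFinset_eq_degree]
  omega

theorem SufficientControlSet.exists_isActivationSchedule [DecidableEq V]
    (h : SufficientControlSet (majU G) S) : ∃ τ, IsActivationSchedule G S τ := by
  obtain ⟨n, x, hx0, hxn, hstep⟩ := h
  have hex : ∀ a, ∃ k, x k a = true := fun a => ⟨n, by simp [hxn, indicator]⟩
  refine ⟨fun a => Nat.find (hex a), fun a => ?_, fun a ha => ?_⟩
  · simp [Nat.find_eq_zero, hx0, indicator]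
  · obtain ⟨k, hk⟩ := Nat.exists_eq_succ_of_ne_zero
      (mt (Nat.find_eq_zero (hex a)).mp (by simpa [hx0, indicator] using ha))
    have hoff : x k a = false := by simpa using Nat.find_min (hex a) (hk ▸ k.lt_succ_self)
    have hon : x (k + 1) a = true := by simpa [hk] using Nat.find_spec (hex a)
    have hkn : k < n := by
      have := Nat.find_min' (hex a) (show x n a = true by simp [hxn, indicator])
      omega
    obtain ⟨i, -, hupd, himp⟩ := hstep k hkn
    obtain rfl : i = a := by
      by_contra hia
      rw [hupd, Function.update_of_ne (Ne.symm hia), hoff] at hon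
      exact Bool.false_ne_true hon
    rw [hupd, hoff, Bool.not_false] at himp
    refine (degree_le_two_mul_card_of_majU_le hoff himp).trans ?_
    simp only [hk]
    gcongr with b
    exact fun hb => Nat.lt_succ_of_le (Nat.find_min' _ hb)

namespace IsActivationSchedule

lemma degree_le_two_mul_card (hτ : IsActivationSchedule G S τ) (ha : a ∉ S) {B : Finset V}
    (hB : ∀ b, G.Adj a b → τ b < τ a → b ∈ B) : G.degree a ≤ 2 * #B := by
  refine (hτ.degree_le a ha).trans (Nat.mul_le_mul_left 2 (card_le_card fun b hb => ?_))
  simp only [mem_filter, SimpleGraph.mem_neighborFinset] at hb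
  exact hB b hb.1 hb.2

lemma lt_of_neighborFinset_eq_singleton (hτ : IsActivationSchedule G S τ) (ha : a ∉ S) {u : V}
    (hu : G.neighborFinset a = {u}) : τ u < τ a := by
  by_contra hlt
  have := hτ.degree_le_two_mul_card ha (B := ∅) fun b hb hba => by
    rw [← G.mem_neighborFinset, hu, mem_singleton] at hb
    exact absurd (hb ▸ hba) hlt
  simp [← G.card_neighborFinset_eq_degree, hu] at this

end IsActivationSchedule

end Schedule

namespace SatNode

variable {v m : ℕ} {c : Fin m → Fin 3 → Fin v × Bool}

def lit (l : Fin v × Bool) : SatNode v m := if l.2 then .y l.1 else .ybar l.1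

@[simp] lemma lit_true (i : Fin v) : (lit (i, true) : SatNode v m) = y i := rfl
@[simp] lemma lit_false (i : Fin v) : (lit (i, false) : SatNode v m) = ybar i := rfl

@[simp] lemma lit_eq_y_iff {l : Fin v × Bool} {i : Fin v} :
    (lit l : SatNode v m) = y i ↔ l = (i, true) := by
  obtain ⟨_, _ | _⟩ := l <;> simp
@[simp] lemma lit_eq_ybar_iff {l : Fin v × Bool} {i : Fin v} :
    (lit l : SatNode v m) = ybar i ↔ l = (i, false) := by
  obtain ⟨_, _ | _⟩ := l <;> simp
@[simp] lemma lit_ne_w (l : Fin v × Bool) (j : Fin m) : lit l ≠ w j := by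
  obtain ⟨_, _ | _⟩ := l <;> simp
@[simp] lemma lit_ne_z (l : Fin v × Bool) : (lit l : SatNode v m) ≠ z := by
  obtain ⟨_, _ | _⟩ := l <;> simp
@[simp] lemma lit_ne_leafL (l : Fin v × Bool) (j : Fin m) (t : Fin 3) : lit l ≠ leafL j t := by
  obtain ⟨_, _ | _⟩ := l <;> simp
@[simp] lemma lit_ne_leafM (l : Fin v × Bool) (r : Fin (m + 1)) : lit l ≠ leafM r := by
  obtain ⟨_, _ | _⟩ := l <;> simp

@[simp] lemma leafL_ne_lit (l : Fin v × Bool) (j : Fin m) (t : Fin 3) : leafL j t ≠ lit l :=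
  (lit_ne_leafL l j t).symm
@[simp] lemma leafM_ne_lit (l : Fin v × Bool) (r : Fin (m + 1)) : leafM r ≠ lit l :=
  (lit_ne_leafM l r).symm

@[simp] lemma w_ne_lit (l : Fin v × Bool) (j : Fin m) : w j ≠ lit l :=
  (lit_ne_w l j).symm

lemma lit_injective : Function.Injective (lit : Fin v × Bool → SatNode v m) := by
  rintro ⟨i, _ | _⟩ l h <;> simpa [eq_comm] using h

lemma litNode_eq_lit (j : Fin m) (t : Fin 3) : litNode c j t = lit (c j t) := rfl

def varOf (c : Fin m → Fin 3 → Fin v × Bool) : SatNode v m → Option (Fin v)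
  | .y i | .ybar i => some i
  | .leafL j t => some (c j t).1
  | _ => none

@[simp] lemma varOf_lit (l : Fin v × Bool) : varOf c (lit l) = some l.1 := by
  obtain ⟨_, _ | _⟩ := l <;> rfl

@[simp] lemma varOf_leafL (j : Fin m) (t : Fin 3) : varOf c (leafL j t) = some (c j t).1 := rfl

lemma varOf_eq_some_iff {a : SatNode v m} {i : Fin v} :
    varOf c a = some i ↔
      (∃ b, a = lit (i, b)) ∨ ∃ j t, (c j t).1 = i ∧ a = leafL j t := by
  cases a <;> simp [varOf, eq_comm]

def clauseNodes (c : Fin m → Fin 3 → Fin v × Bool) (l : Fin v × Bool) :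
    Finset (SatNode v m) :=
  (univ.filter fun p : Fin m × Fin 3 => c p.1 p.2 = l).image fun p => w p.1

def leafNodes (c : Fin m → Fin 3 → Fin v × Bool) (l : Fin v × Bool) :
    Finset (SatNode v m) :=
  (univ.filter fun p : Fin m × Fin 3 => c p.1 p.2 = l).image fun p => leafL p.1 p.2

end SatNode

section SatGraph

open SatNode

variable {v m : ℕ} {c : Fin m → Fin 3 → Fin v × Bool}

lemma satGraph_adj {a b : SatNode v m} :
    (satGraph c).Adj a b ↔ a ≠ b ∧ (satBase c a b = true ∨ satBase c b a = true) := Iff.rfl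

lemma neighborFinset_leafL (j : Fin m) (t : Fin 3) :
    (satGraph c).neighborFinset (leafL j t) = {lit (c j t)} := by
  ext b
  cases b <;>
    simp [SimpleGraph.mem_neighborFinset, satGraph_adj, satBase, litNode_eq_lit, eq_comm]

lemma neighborFinset_leafM (r : Fin (m + 1)) :
    (satGraph c).neighborFinset (leafM r) = {z} := by
  ext b
  cases b <;> simp [SimpleGraph.mem_neighborFinset, satGraph_adj, satBase, litNode_eq_lit]

lemma neighborFinset_z :
    (satGraph c).neighborFinset z = univ.image w ∪ univ.image leafM := by
  ext b
  cases b <;> simp [SimpleGraph.mem_neighborFinset, satGraph_adj, satBase, litNode_eq_lit]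

lemma neighborFinset_w (j : Fin m) :
    (satGraph c).neighborFinset (w j) = insert z (univ.image fun t => lit (c j t)) := by
  ext b
  cases b <;>
    simp [SimpleGraph.mem_neighborFinset, satGraph_adj, satBase, litNode_eq_lit, eq_comm]

lemma neighborFinset_lit (l : Fin v × Bool) :
    (satGraph c).neighborFinset (lit l) =
      insert (lit (l.1, !l.2)) (clauseNodes c l ∪ leafNodes c l) := by
  ext b
  rw [SimpleGraph.mem_neighborFinset, satGraph_adj]
  obtain ⟨i, _ | _⟩ := l <;> cases b <;>
    simp [satBase, litNode_eq_lit, clauseNodes, leafNodes, eq_comm]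

lemma degree_z : (satGraph c).degree z = 2 * m + 1 := by
  rw [← SimpleGraph.card_neighborFinset_eq_degree, neighborFinset_z, card_union_of_disjoint,
    card_image_of_injective _ fun _ _ => w.inj, card_image_of_injective _ fun _ _ => leafM.inj]
  · simp; ring
  · simp [disjoint_left]

lemma degree_w {j : Fin m} (hc : Function.Injective fun t => (c j t).1) :
    (satGraph c).degree (w j) = 4 := by
  have hinj : Function.Injective fun t => (lit (c j t) : SatNode v m) :=
    fun t t' h => hc (congrArg Prod.fst (lit_injective h))
  rw [← SimpleGraph.card_neighborFinset_eq_degree, neighborFinset_w, card_insert_of_notMem,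
    card_image_of_injective _ hinj]
  · simp
  · simp

lemma two_mul_card_clauseNodes_lt_degree (l : Fin v × Bool) :
    2 * #(clauseNodes c l : Finset (SatNode v m)) < (satGraph c).degree (lit l) := by
  have hleaf : #(leafNodes c l : Finset (SatNode v m)) =
      #(univ.filter fun p : Fin m × Fin 3 => c p.1 p.2 = l) :=
    card_image_of_injective _ fun p q h => by cases p; cases q; cases h; rfl
  have hclause : #(clauseNodes c l : Finset (SatNode v m)) ≤ #(leafNodes c l) :=
    hleaf ▸ card_image_le
  rw [← SimpleGraph.card_neighborFinset_eq_degree, neighborFinset_lit, card_insert_of_notMem,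
    card_union_of_disjoint]
  · omega
  · simp only [disjoint_left, clauseNodes, leafNodes, mem_image]
    rintro _ ⟨_, _, rfl⟩ ⟨_, _, h⟩
    cases h
  · simp [clauseNodes, leafNodes]

namespace IsActivationSchedule

variable {S : Finset (SatNode v m)} {τ : SatNode v m → ℕ}

lemma lit_lt_leafL (hτ : IsActivationSchedule (satGraph c) S τ) {j : Fin m} {t : Fin 3}
    (h : leafL j t ∉ S) : τ (lit (c j t)) < τ (leafL j t) :=
  hτ.lt_of_neighborFinset_eq_singleton h (neighborFinset_leafL j t)

lemma exists_mem_z_or_leafM (hτ : IsActivationSchedule (satGraph c) S τ) :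
    ∃ a ∈ S, a = z ∨ ∃ r, a = leafM r := by
  by_contra! h
  have hz : z ∉ S := fun hz => (h z hz).1 rfl
  have hM : ∀ r, τ z < τ (leafM r) := fun r =>
    hτ.lt_of_neighborFinset_eq_singleton (fun hr => (h _ hr).2 r rfl) (neighborFinset_leafM r)
  have := hτ.degree_le_two_mul_card hz (B := univ.image w) fun b hb hbz => by
    rw [← SimpleGraph.mem_neighborFinset, neighborFinset_z, mem_union] at hb
    obtain hb | ⟨r, -, rfl⟩ := hb.imp_right mem_image.mp
    · exact hb
    · exact absurd hbz (hM r).not_gt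
  have := (card_image_le (s := univ) (f := (w : Fin m → SatNode v m))).trans_eq (card_fin m)
  rw [degree_z] at *
  omega

lemma adj_lit_of_lt (hτ : IsActivationSchedule (satGraph c) S τ) {l : Fin v × Bool}
    (hleaves : ∀ j t, c j t = l → leafL j t ∉ S) {b : SatNode v m}
    (hadj : (satGraph c).Adj (lit l) b) (hb : τ b < τ (lit l)) :
    b = lit (l.1, !l.2) ∨ b ∈ clauseNodes c l := by
  rw [← SimpleGraph.mem_neighborFinset, neighborFinset_lit, mem_insert, mem_union] at hadj
  rcases hadj with hb' | hb' | hb'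
  · exact .inl hb'
  · exact .inr hb'
  · obtain ⟨⟨j, t⟩, hjt, rfl⟩ := mem_image.mp hb'
    rw [mem_filter] at hjt
    have := hτ.lit_lt_leafL (hleaves j t hjt.2)
    rw [hjt.2] at this
    exact absurd hb this.not_gt

lemma exists_mem_varOf_eq_some (hτ : IsActivationSchedule (satGraph c) S τ) (i : Fin v) :
    ∃ a ∈ S, varOf c a = some i := by
  by_contra! h
  obtain ⟨a, ha, hmin⟩ := (univ.filter fun a => varOf c a = some i).exists_min_image τ
    ⟨lit (i, true), by simp only [mem_filter, mem_univ, varOf_lit, and_self]⟩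
  rw [mem_filter] at ha
  have haS : a ∉ S := fun haS => h a haS ha.2
  obtain ⟨b, rfl⟩ | ⟨j, t, hi, rfl⟩ := varOf_eq_some_iff.mp ha.2
  · have := hτ.degree_le_two_mul_card haS fun a' hadj hlt => by
      refine (hτ.adj_lit_of_lt (fun j t hjt hS => h _ hS ?_) hadj hlt).resolve_left ?_
      · simp [hjt]
      · rintro rfl
        exact (hmin _ (by simp)).not_gt hlt
    exact (two_mul_card_clauseNodes_lt_degree _).not_ge this
  · exact (hτ.lit_lt_leafL haS).not_ge (hmin _ (by simp [hi]))

lemma exists_lit_lt_w (hτ : IsActivationSchedule (satGraph c) S τ) {j : Fin m}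
    (hc : Function.Injective fun t => (c j t).1) (hw : w j ∉ S) :
    ∃ t, τ (lit (c j t)) < τ (w j) := by
  by_contra! h
  have := hτ.degree_le_two_mul_card hw (B := {z}) fun b hb hlt => by
    rw [← SimpleGraph.mem_neighborFinset, neighborFinset_w, mem_insert, mem_image] at hb
    obtain rfl | ⟨t, -, rfl⟩ := hb
    · exact mem_singleton_self z
    · exact absurd hlt (h t).not_gt
  rw [degree_w hc, card_singleton] at this
  omega

lemma lit_lt_lit_neg (hτ : IsActivationSchedule (satGraph c) S τ)
    (hinj : Set.InjOn (varOf c) S) {l : Fin v × Bool} {j : Fin m} {t : Fin 3}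
    (hjt : c j t = l) (hlt : τ (lit l) < τ (w j)) : τ (lit l) < τ (lit (l.1, !l.2)) := by
  by_contra! hge
  -- If no leaf of `lit l` is in `S`, then `lit l` lacks support; otherwise its complement does.
  by_cases hleaf : ∀ j' t', c j' t' = l → leafL j' t' ∉ S
  · have hpos : lit l ∉ S := fun h => by
      have hneg : lit (l.1, !l.2) ∈ S := by
        rw [← hτ.eq_zero_iff] at h ⊢
        omega
      simpa [Prod.ext_iff] using lit_injective (hinj h hneg (by simp))
    have hwj : w j ∈ clauseNodes c l := mem_image.mpr ⟨(j, t), by simp [hjt], rfl⟩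
    have := hτ.degree_le_two_mul_card hpos
      (B := insert (lit (l.1, !l.2)) ((clauseNodes c l).erase (w j))) fun b hadj hb => by
        rcases hτ.adj_lit_of_lt hleaf hadj hb with rfl | hb'
        · exact mem_insert_self _ _
        · exact mem_insert_of_mem (mem_erase.mpr ⟨by rintro rfl; omega, hb'⟩)
    have hcard := card_insert_le (lit (l.1, !l.2)) ((clauseNodes c l).erase (w j))
    rw [card_erase_of_mem hwj] at hcard
    have := card_pos.mpr ⟨_, hwj⟩
    have := two_mul_card_clauseNodes_lt_degree (c := c) l
    omega
  · simp only [not_forall, not_not] at hleaf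
    obtain ⟨j', t', hl, hS⟩ := hleaf
    have hneg : lit (l.1, !l.2) ∉ S := fun h => by
      simpa using hinj h hS (by simp [hl])
    have hleaves : ∀ j t, c j t = (l.1, !l.2) → leafL j t ∉ S := fun j t h hS' => by
      obtain ⟨rfl, rfl⟩ := leafL.inj (hinj hS' hS (by simp [h, hl]))
      simp [hl, Prod.ext_iff] at h
    have := hτ.degree_le_two_mul_card hneg fun b hadj hb =>
      (hτ.adj_lit_of_lt hleaves hadj hb).resolve_left (by rintro rfl; simp at hb; omega)
    exact (two_mul_card_clauseNodes_lt_degree _).not_ge this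

end IsActivationSchedule

end SatGraph

open SatNode in
/-- If the majority game on the graph `G_I` associated to a 3-SAT instance with
`s−1 = v` variables and `m` clauses (each clause containing exactly three literals on
three distinct variables) admits a sufficient control set of size `s = v + 1`, then the
instance is satisfiable. -/
theorem sufficient_control_set_implies_sat
    (v m : ℕ) (c : Fin m → Fin 3 → Fin v × Bool)
    (hc : ∀ j, Function.Injective (fun t => (c j t).1))
    (S : Finset (SatNode v m)) (hcard : S.card = v + 1)
    (hS : SufficientControlSet (majU (satGraph c)) S) :
    ∃ σ : Fin v → Bool, ∀ j, ∃ t, σ (c j t).1 = (c j t).2 := by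
  obtain ⟨τ, hτ⟩ := hS.exists_isActivationSchedule
  obtain ⟨q, hqS, hq⟩ := hτ.exists_mem_z_or_leafM
  have hqvar : varOf c q = none := by rcases hq with rfl | ⟨r, rfl⟩ <;> rfl
  have hinj : Set.InjOn (varOf c) S := by
    refine injOn_of_surjOn_of_card_le (t := univ) _ (fun _ _ => mem_univ _) ?_
      (by simp [hcard])
    rintro (_ | i) -
    · exact ⟨q, hqS, hqvar⟩
    · exact hτ.exists_mem_varOf_eq_some i
  refine ⟨fun i => decide (τ (y i) < τ (ybar i)), fun j => ?_⟩
  -- `w j` would share the fibre `none` of `varOf c` with `q`.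
  have hw : w j ∉ S := fun hw => by
    rcases hq with rfl | ⟨r, rfl⟩ <;> cases hinj hw hqS hqvar
  obtain ⟨t, ht⟩ := hτ.exists_lit_lt_w (hc j) hw
  have hneg := hτ.lit_lt_lit_neg hinj rfl ht
  refine ⟨t, ?_⟩
  generalize c j t = l at hneg ⊢
  obtain ⟨i, _ | _⟩ := l
  · simpa using hneg.not_gt
  · simpa using hneg
end

section
/- In a finite super-modular game with binary actions, let S be a minimal sufficient control set (a sufficient control set no proper subset of which is a sufficient control set). Then 𝟙_S belongs to the reachable set Z and 𝟙_S is an absorbing state for the decreasing dynamics: for every player i ∈ S, u_i(𝟙_S − δ_i) > u_i(𝟙_S). -/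
open Finset

/-- The reachable set `Z`: a profile `x` belongs to `Z` if there is a finite sequence of
profiles starting from the all-ones profile `𝟙` and ending at `x` in which, at each step,
some player `i` playing `1` switches to `0` (the profile decreases by `δ_i`) without
increasing her utility (`u_i(y^k) ≤ u_i(y^{k−1})`). -/
def ReachableFromTop {V : Type*} [DecidableEq V] (u : V → (V → Bool) → ℝ)
    (x : V → Bool) : Prop :=
  ∃ (l : ℕ) (y : ℕ → V → Bool),
    y 0 = (fun _ => true) ∧ y l = x ∧
    ∀ k < l, ∃ i, y k i = true ∧ y (k + 1) = Function.update (y k) i false ∧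
      u i (y (k + 1)) ≤ u i (y k)

/-- Auxiliary: a decreasing improvement path from profile `a` to profile `b`. -/
def DownPath {V : Type*} [DecidableEq V] (u : V → (V → Bool) → ℝ)
    (a b : V → Bool) : Prop :=
  ∃ (l : ℕ) (y : ℕ → V → Bool),
    y 0 = a ∧ y l = b ∧
    ∀ k < l, ∃ i, y k i = true ∧ y (k + 1) = Function.update (y k) i false ∧
      u i (y (k + 1)) ≤ u i (y k)

lemma DownPath.cons {V : Type*} [DecidableEq V] {u : V → (V → Bool) → ℝ}
    {a b c : V → Bool} (i : V) (hai : a i = true)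
    (hb : Function.update a i false = b) (hu : u i b ≤ u i a)
    (h : DownPath u b c) : DownPath u a c := by
  obtain ⟨l, y, h0, hl, hstep⟩ := h
  refine ⟨l + 1, fun k => if k = 0 then a else y (k - 1), by simp, by simp [hl], ?_⟩
  intro k hk
  cases k with
  | zero => exact ⟨i, by simpa using hai, by simp [h0, hb], by simp [h0, hu]⟩
  | succ k =>
    obtain ⟨j, h1, h2, h3⟩ := hstep k (by omega)
    exact ⟨j, by simpa using h1, by simpa using h2, by simpa using h3⟩

/-- In a finite super-modular game with binary actions, if `S` is a minimal sufficient
control set (a sufficient control set no proper subset of which is a sufficient control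
set), then `𝟙_S` belongs to the reachable set `Z` and `𝟙_S` is an absorbing state for the
decreasing dynamics: for every player `i ∈ S`, `u_i(𝟙_S − δ_i) > u_i(𝟙_S)`. -/
theorem minimal_sufficient_reachable_absorbing
    {V : Type*} [Fintype V] [DecidableEq V]
    (u : V → (V → Bool) → ℝ) (hu : Supermodular u) (S : Finset V)
    (hS : SufficientControlSet u S)
    (hmin : ∀ T : Finset V, T ⊂ S → ¬ SufficientControlSet u T) :
    ReachableFromTop u (indicator S) ∧
      ∀ i ∈ S, u i (indicator S) < u i (Function.update (indicator S) i false) := by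
  obtain ⟨m, x, hx0, hxm, hstep⟩ := hS
  constructor
  · -- reachability from the top
    have key : ∀ k ≤ m, ∃ z : V → Bool,
        (∀ j, x k j ≤ z j) ∧ DownPath u z (indicator S) := by
      intro k hk
      induction k with
      | zero =>
        exact ⟨indicator S, fun j => by rw [hx0], ⟨0, fun _ => indicator S, rfl, rfl,
          fun k hk => absurd hk (by omega)⟩⟩
      | succ k ih =>
        obtain ⟨z, hz1, hz3⟩ := ih (by omega)
        obtain ⟨i, hiS, hflip, huimp⟩ := hstep k (by omega)
        cases hxi : x k i with
        | true =>
          refine ⟨z, fun j => ?_, hz3⟩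
          rw [hflip]
          by_cases hj : j = i
          · subst hj; simp [hxi]
          · simpa [Function.update, hj] using hz1 j
        | false =>
          have hxk : Function.update (x k) i false = x k := by
            funext j; by_cases hj : j = i <;> simp [Function.update, hj, hxi]
          have hxk1 : Function.update (x k) i true = x (k + 1) := by
            rw [hflip, hxi]; rfl
          cases hzi : z i with
          | true =>
            refine ⟨z, fun j => ?_, hz3⟩
            rw [hflip]
            by_cases hj : j = i
            · subst hj; simp [hzi]
            · simpa [Function.update, hj] using hz1 j
          | false =>
            have hzz : Function.update z i false = z := by
              funext j; by_cases hj : j = i <;> simp [Function.update, hj, hzi]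
            have hsm := hu i z (x k) (fun j _ => hz1 j)
            rw [hxk, hxk1, hzz] at hsm
            have hle : u i z ≤ u i (Function.update z i true) := by linarith
            refine ⟨Function.update z i true, fun j => ?_, ?_⟩
            · rw [hflip]
              by_cases hj : j = i
              · subst hj; simp
              · simpa [Function.update, hj] using hz1 j
            · refine DownPath.cons i (by simp) ?_ ?_ hz3
              · rw [Function.update_idem, hzz]
              · exact hle
    obtain ⟨z, hz1, hz3⟩ := key m le_rfl
    have hz : z = fun _ => true := by
      funext j
      have := hz1 j
      rw [hxm] at this
      have h2 : true ≤ z j := by simpa [indicator] using this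
      exact (le_antisymm h2 (Bool.le_true _)).symm
    subst hz
    exact hz3
  · -- absorbing
    intro i hiS
    by_contra h
    push_neg at h
    refine hmin (S.erase i) (Finset.erase_ssubset hiS) ?_
    have hT : indicator (S.erase i) = Function.update (indicator S) i false := by
      funext j
      by_cases hj : j = i <;> simp [indicator, Function.update, hj]
    have hTS : Function.update (indicator (S.erase i)) i true = indicator S := by
      funext j
      by_cases hj : j = i <;> simp [indicator, Function.update, hj, hiS]
    refine ⟨m + 1, fun k => Nat.casesOn k (indicator (S.erase i)) (fun k => x k),
      rfl, hxm, ?_⟩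
    intro k hk
    cases k with
    | zero =>
      refine ⟨i, by simp, ?_, ?_⟩
      · show x 0 = Function.update (indicator (S.erase i)) i !(indicator (S.erase i) i)
        have hfi : indicator (S.erase i) i = false := by simp [indicator]
        rw [hfi, hx0]
        exact hTS.symm
      · show u i (indicator (S.erase i)) ≤ u i (x 0)
        rw [hx0, hT]
        exact h
    | succ k =>
      obtain ⟨j, hj, h2, h3⟩ := hstep k (by omega)
      exact ⟨j, fun hjT => hj (Finset.mem_of_mem_erase hjT), h2, h3⟩
end

section
/- In a finite super-modular game with binary actions, for every ε > 0 the transition kernel P^ε keeps the reachable set Z invariant: if x ∈ Z and y ∈ {0,1}^n satisfy P^ε_{x,y} > 0, then y ∈ Z. -/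
open Finset

open scoped Classical

/-- Off-diagonal transition probabilities of the kernel `P^ε`: probability `1/n` of moving
from `x` to `x − δ_i` when player `i` plays `1` and `u_i(x − δ_i) ≤ u_i(x)`, probability
`ε/n` of moving from `x` to `x + δ_i` when player `i` plays `0` and
`u_i(x + δ_i) ≥ u_i(x)`, and `0` otherwise. -/
noncomputable def Poff {V : Type*} [Fintype V] [DecidableEq V]
    (u : V → (V → Bool) → ℝ) (ε : ℝ) (x y : V → Bool) : ℝ :=
  if ∃ i, x i = true ∧ y = Function.update x i false ∧ u i y ≤ u i x then
    1 / (Fintype.card V : ℝ)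
  else if ∃ i, x i = false ∧ y = Function.update x i true ∧ u i x ≤ u i y then
    ε / (Fintype.card V : ℝ)
  else 0

/-- The transition kernel `P^ε` on the profile space `{0,1}^V`: off the diagonal it is
given by `Poff`, and the diagonal entry is chosen so that each row sums to one. -/
noncomputable def Pkern {V : Type*} [Fintype V] [DecidableEq V]
    (u : V → (V → Bool) → ℝ) (ε : ℝ) (x y : V → Bool) : ℝ :=
  if y = x then 1 - ∑ y' ∈ Finset.univ.filter (fun y' => y' ≠ x), Poff u ε x y'
  else Poff u ε x y

/-- The reachable set `Z`: the set of profiles reachable from the all-ones profile `𝟙` by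
steps of positive probability for the kernel `P^0`. -/
noncomputable def ReachZ {V : Type*} [Fintype V] [DecidableEq V]
    (u : V → (V → Bool) → ℝ) (x : V → Bool) : Prop :=
  ∃ (l : ℕ) (y : ℕ → V → Bool),
    y 0 = (fun _ => true) ∧ y l = x ∧
    ∀ k < l, 0 < Pkern u 0 (y k) (y (k + 1))

lemma reach_extend {V : Type*} [Fintype V] [DecidableEq V]
    (u : V → (V → Bool) → ℝ) (x y : V → Bool)
    (hx : ReachZ u x) (h : 0 < Pkern u 0 x y) : ReachZ u y := by
  obtain ⟨l, z, h0, hl, hs⟩ := hx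
  refine ⟨l + 1, fun k => if k ≤ l then z k else y, by simp [h0], by simp, ?_⟩
  intro k hk
  rcases lt_or_eq_of_le (Nat.lt_succ_iff.mp hk) with hk' | hk'
  · simpa [Nat.le_of_lt hk', Nat.succ_le_of_lt hk'] using hs k hk'
  · subst hk'
    simpa [hl, Nat.not_succ_le_self] using h

lemma step_down {V : Type*} [Fintype V] [DecidableEq V]
    (u : V → (V → Bool) → ℝ) (ε : ℝ) (x : V → Bool) (i : V)
    (hi : x i = true) (hud : u i (Function.update x i false) ≤ u i x) :
    0 < Pkern u ε x (Function.update x i false) := by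
  have hne : Function.update x i false ≠ x := by
    intro h
    have := congrFun h i
    simp [hi] at this
  rw [Pkern, if_neg hne, Poff, if_pos ⟨i, hi, rfl, hud⟩]
  have hcard : (0 : ℝ) < (Fintype.card V : ℝ) := by
    exact_mod_cast Fintype.card_pos_iff.mpr ⟨i⟩
  positivity

lemma step0_char {V : Type*} [Fintype V] [DecidableEq V]
    (u : V → (V → Bool) → ℝ) (a b : V → Bool)
    (h : 0 < Pkern u 0 a b) :
    b = a ∨ ∃ i, a i = true ∧ b = Function.update a i false ∧ u i b ≤ u i a := by
  by_cases hba : b = a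
  · exact Or.inl hba
  right
  rw [Pkern, if_neg hba, Poff] at h
  split_ifs at h with h1 h2
  · exact h1
  · simp at h
  · exact absurd h (lt_irrefl 0)

lemma main_lemma {V : Type*} [Fintype V] [DecidableEq V]
    (u : V → (V → Bool) → ℝ) (hu : Supermodular u)
    (z : ℕ → V → Bool) (h0 : z 0 = fun _ => true) :
    ∀ l, (∀ k < l, 0 < Pkern u 0 (z k) (z (k + 1))) →
      ∀ i, u i (z l) ≤ u i (Function.update (z l) i true) →
      ReachZ u (Function.update (z l) i true) := by
  intro l
  induction l with
  | zero =>
    intro _ i _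
    have heq : Function.update (z 0) i true = z 0 := by
      funext j
      by_cases hj : j = i <;> simp [h0, hj, Function.update]
    rw [heq]
    exact ⟨0, z, h0, rfl, by omega⟩
  | succ l ih =>
    intro hs i hui
    have hzl : ReachZ u (z (l + 1)) := ⟨l + 1, z, h0, rfl, hs⟩
    by_cases hb : z (l + 1) i = true
    · have heq : Function.update (z (l + 1)) i true = z (l + 1) := by
        funext j
        by_cases hj : j = i <;> simp [Function.update, hj, hb]
      rw [heq]
      exact hzl
    have hb' : z (l + 1) i = false := by
      cases h : z (l + 1) i
      · rfl
      · exact absurd h hb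
    rcases step0_char u (z l) (z (l + 1)) (hs l (by omega)) with heq | ⟨j, hj1, hj2, hj3⟩
    · rw [heq] at hui ⊢
      exact ih (fun k hk => hs k (by omega)) i hui
    · by_cases hji : j = i
      · subst hji
        have heq : Function.update (z (l + 1)) j true = z l := by
          funext j'
          by_cases hj' : j' = j
          · subst hj'; simp [hj1]
          · simp [Function.update, hj', hj2]
        rw [heq]
        exact ⟨l, z, h0, rfl, fun k hk => hs k (by omega)⟩
      · -- j ≠ i : z (l+1) = update (z l) j false
        have hzli : z l i = false := by
          have := congrFun hj2 i
          rw [hb'] at this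
          rw [Function.update_of_ne (by exact fun h => hji h.symm) _ _] at this
          exact this.symm
        have hle : ∀ j', j' ≠ i → z (l + 1) j' ≤ z l j' := by
          intro j' _
          rw [hj2]
          by_cases hj' : j' = j
          · subst hj'; simp
          · simp [Function.update, hj']
        have hsm := hu i (z l) (z (l + 1)) hle
        have e1 : Function.update (z (l + 1)) i false = z (l + 1) := by
          funext j'
          by_cases hj' : j' = i <;> simp [Function.update, hj', hb']
        have e2 : Function.update (z l) i false = z l := by
          funext j'
          by_cases hj' : j' = i <;> simp [Function.update, hj', hzli]
        rw [e1, e2] at hsm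
        have hcond : u i (z l) ≤ u i (Function.update (z l) i true) := by
          have h1 : (0 : ℝ) ≤ u i (Function.update (z (l + 1)) i true) - u i (z (l + 1)) :=
            sub_nonneg.mpr hui
          linarith
        have ha' : ReachZ u (Function.update (z l) i true) :=
          ih (fun k hk => hs k (by omega)) i hcond
        set a' := Function.update (z l) i true with ha'def
        have ha'j : a' j = true := by
          rw [ha'def, Function.update_of_ne hji, hj1]
        -- supermodularity for j at a' vs z l
        have hle2 : ∀ j', j' ≠ j → z l j' ≤ a' j' := by
          intro j' _
          rw [ha'def]
          by_cases hj' : j' = i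
          · subst hj'; simp
          · simp [Function.update, hj']
        have hsm2 := hu j a' (z l) hle2
        have e3 : Function.update (z l) j true = z l := by
          funext j'
          by_cases hj' : j' = j <;> simp [Function.update, hj', hj1]
        have e4 : Function.update a' j true = a' := by
          funext j'
          by_cases hj' : j' = j <;> simp [Function.update, hj', ha'j]
        rw [e3, e4, ← hj2] at hsm2
        have hdown : u j (Function.update a' j false) ≤ u j a' := by linarith
        have hstep := step_down u 0 a' j ha'j hdown
        have hij : ¬ i = j := fun h => hji h.symm
        have hfinal : Function.update a' j false = Function.update (z (l + 1)) i true := by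
          funext w
          rw [ha'def, hj2]
          by_cases hw : w = j
          · subst hw
            simp [Function.update, hji, hij]
          · by_cases hw' : w = i
            · subst hw'
              simp [Function.update, hij, hji]
            · simp [Function.update, hw, hw']
        rw [← hfinal]
        exact reach_extend u a' _ ha' hstep

/-- In a finite super-modular game with binary actions, for every `ε > 0` the transition
kernel `P^ε` keeps the reachable set `Z` invariant: if `x ∈ Z` and `P^ε_{x,y} > 0`, then
`y ∈ Z`. -/
theorem kernel_keeps_Z_invariant
    {V : Type*} [Fintype V] [DecidableEq V]
    (u : V → (V → Bool) → ℝ) (hu : Supermodular u) (ε : ℝ) (hε : 0 < ε)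
    (x y : V → Bool) (hx : ReachZ u x) (hxy : 0 < Pkern u ε x y) :
    ReachZ u y := by
  by_cases hyx : y = x
  · rwa [hyx]
  rw [Pkern, if_neg hyx, Poff] at hxy
  split_ifs at hxy with h1 h2
  · obtain ⟨i, hi, hy, hud⟩ := h1
    subst hy
    exact reach_extend u x _ hx (step_down u 0 x i hi hud)
  · obtain ⟨i, hi, hy, hud⟩ := h2
    subst hy
    obtain ⟨l, z, h0, hl, hs⟩ := hx
    have hmain := main_lemma u hu z h0 l hs i (by rw [hl]; exact hud)
    rwa [hl] at hmain
  · exact absurd hxy (lt_irrefl 0)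
end

section
/- In a finite super-modular game with binary actions, for every ε > 0 the transition kernel P^ε satisfies the detailed balance equations with respect to the weights ε^{||x||₁}: for all profiles x, y ∈ {0,1}^n, ε^{||x||₁} · P^ε_{x,y} = ε^{||y||₁} · P^ε_{y,x}, where ||x||₁ = Σ_k x_k. Consequently, the probability distribution μ^ε on Z defined by μ^ε_x = ε^{||x||₁} / K_ε with K_ε = Σ_{x∈Z} ε^{||x||₁} is a stationary distribution of P^ε restricted to Z: Σ_{x∈Z} μ^ε_x P^ε_{x,y} = μ^ε_y for every y ∈ Z. -/
open Finset

open scoped Classical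

/-- The number of players playing action `1` in the profile `x`, i.e. `||x||₁`. -/
def norm1 {V : Type*} [Fintype V] (x : V → Bool) : ℕ :=
  (Finset.univ.filter fun i => x i = true).card

section Helpers

variable {V : Type*} [Fintype V] [DecidableEq V]

lemma update_flip (x : V → Bool) (i : V) (b c : Bool) (hx : x i = b) :
    Function.update (Function.update x i c) i b = x := by
  rw [Function.update_idem, ← hx, Function.update_eq_self]

lemma norm1_update_false (x : V → Bool) (i : V) (hx : x i = true) :
    norm1 x = norm1 (Function.update x i false) + 1 := by
  unfold norm1
  have h : (Finset.univ.filter fun j => x j = true)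
      = insert i (Finset.univ.filter fun j => Function.update x i false j = true) := by
    ext j
    by_cases hj : j = i
    · subst hj; simp [hx, Function.update_self]
    · simp [Function.update_apply, hj]
  rw [h, Finset.card_insert_of_notMem]
  simp [Function.update_self]

lemma down_iff_up (u : V → (V → Bool) → ℝ) (x y : V → Bool) :
    (∃ i, x i = true ∧ y = Function.update x i false ∧ u i y ≤ u i x) ↔
    (∃ i, y i = false ∧ x = Function.update y i true ∧ u i y ≤ u i x) := by
  constructor
  · rintro ⟨i, hx, rfl, h⟩
    exact ⟨i, by simp, (update_flip x i true false hx).symm, h⟩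
  · rintro ⟨i, hy, rfl, h⟩
    exact ⟨i, by simp, (update_flip y i false true hy).symm, h⟩

lemma not_down_both (u : V → (V → Bool) → ℝ) (x y : V → Bool)
    (h1 : ∃ i, x i = true ∧ y = Function.update x i false ∧ u i y ≤ u i x)
    (h2 : ∃ i, y i = true ∧ x = Function.update y i false ∧ u i x ≤ u i y) : False := by
  obtain ⟨i, hxi, hy, -⟩ := h1
  obtain ⟨j, hyj, hx, -⟩ := h2
  by_cases hij : i = j
  · subst hij; rw [hy] at hyj; simp at hyj
  · have h1 : x i = y i := by rw [hx]; exact Function.update_of_ne hij _ _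
    have h2 : y i = false := by rw [hy]; simp
    rw [h1, h2] at hxi; exact Bool.false_ne_true hxi

lemma db_poff_down (u : V → (V → Bool) → ℝ) (ε : ℝ) (x y : V → Bool)
    (hD : ∃ i, x i = true ∧ y = Function.update x i false ∧ u i y ≤ u i x) :
    ε ^ norm1 x * Poff u ε x y = ε ^ norm1 y * Poff u ε y x := by
  have hU : ∃ i, y i = false ∧ x = Function.update y i true ∧ u i y ≤ u i x :=
    (down_iff_up u x y).mp hD
  have hD' : ¬ ∃ i, y i = true ∧ x = Function.update y i false ∧ u i x ≤ u i y :=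
    fun h => not_down_both u x y hD h
  rw [Poff, if_pos hD, Poff, if_neg hD', if_pos hU]
  obtain ⟨i, hxi, hy, -⟩ := hD
  have hn : norm1 x = norm1 y + 1 := by rw [hy]; exact norm1_update_false x i hxi
  rw [hn, pow_succ]; ring

lemma db_poff (u : V → (V → Bool) → ℝ) (ε : ℝ) (x y : V → Bool) :
    ε ^ norm1 x * Poff u ε x y = ε ^ norm1 y * Poff u ε y x := by
  by_cases hD : ∃ i, x i = true ∧ y = Function.update x i false ∧ u i y ≤ u i x
  · exact db_poff_down u ε x y hD
  · by_cases hD' : ∃ i, y i = true ∧ x = Function.update y i false ∧ u i x ≤ u i y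
    · exact (db_poff_down u ε y x hD').symm
    · have hU : ¬ ∃ i, x i = false ∧ y = Function.update x i true ∧ u i x ≤ u i y :=
        fun h => hD' ((down_iff_up u y x).mpr h)
      have hU' : ¬ ∃ i, y i = false ∧ x = Function.update y i true ∧ u i y ≤ u i x :=
        fun h => hD ((down_iff_up u x y).mpr h)
      rw [Poff, if_neg hD, if_neg hU, Poff, if_neg hD', if_neg hU']
      ring

lemma reach_one (u : V → (V → Bool) → ℝ) : ReachZ u (fun _ => true) :=
  ⟨0, fun _ _ => true, rfl, rfl, fun k hk => absurd hk (Nat.not_lt_zero k)⟩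

lemma reach_step (u : V → (V → Bool) → ℝ) {y z : V → Bool}
    (hy : ReachZ u y) (h : 0 < Pkern u 0 y z) : ReachZ u z := by
  obtain ⟨l, p, h0, hl, hstep⟩ := hy
  refine ⟨l + 1, fun k => if k = l + 1 then z else p k, ?_, by simp, ?_⟩
  · have h1 : (0 : ℕ) ≠ l + 1 := by omega
    simp [h1, h0]
  · intro k hk
    by_cases hkl : k = l
    · subst hkl
      have h1 : ¬ (k = k + 1) := by omega
      simp only [if_neg h1, if_pos rfl]
      rwa [hl]
    · have hk1 : k ≠ l + 1 := by omega
      have hk2 : k + 1 ≠ l + 1 := by omega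
      simp only [if_neg hk1, if_neg hk2]
      exact hstep k (by omega)

lemma P0_cases (u : V → (V → Bool) → ℝ) {x y : V → Bool} (h : 0 < Pkern u 0 x y) :
    y = x ∨ ∃ i, x i = true ∧ y = Function.update x i false ∧ u i y ≤ u i x := by
  by_cases hxy : y = x
  · exact Or.inl hxy
  · right
    rw [Pkern, if_neg hxy, Poff] at h
    by_cases hD : ∃ i, x i = true ∧ y = Function.update x i false ∧ u i y ≤ u i x
    · exact hD
    · rw [if_neg hD] at h
      split at h <;> simp at h

lemma P0_down_pos (u : V → (V → Bool) → ℝ) {x : V → Bool} {i : V} (hx : x i = true)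
    (hle : u i (Function.update x i false) ≤ u i x) :
    0 < Pkern u 0 x (Function.update x i false) := by
  have hne : Function.update x i false ≠ x := by
    intro h
    have := congrFun h i
    rw [Function.update_self, hx] at this
    exact Bool.false_ne_true this
  rw [Pkern, if_neg hne, Poff, if_pos ⟨i, hx, rfl, hle⟩]
  have hcard : (0 : ℝ) < Fintype.card V := by
    have : Nonempty V := ⟨i⟩
    exact_mod_cast Fintype.card_pos
  positivity

lemma reach_up (u : V → (V → Bool) → ℝ) (hu : Supermodular u) :
    ∀ (l : ℕ) (p : ℕ → V → Bool), p 0 = (fun _ => true) →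
      (∀ k < l, 0 < Pkern u 0 (p k) (p (k + 1))) →
      ∀ i, ReachZ u (Function.update (p l) i true) := by
  intro l
  induction l with
  | zero =>
    intro p h0 _ i
    rw [h0]
    have h : Function.update (fun _ : V => true) i true = (fun _ => true) := by
      funext j; by_cases h : j = i <;> simp [Function.update_apply, h]
    rw [h]; exact reach_one u
  | succ l ih =>
    intro p h0 hstep i
    have hlast := hstep l (Nat.lt_succ_self l)
    have hprev : ∀ k < l, 0 < Pkern u 0 (p k) (p (k + 1)) := fun k hk => hstep k (by omega)
    rcases P0_cases u hlast with heq | ⟨j, hpj, heqj, hle⟩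
    · rw [heq]; exact ih p h0 hprev i
    · by_cases hij : j = i
      · subst hij
        rw [heqj, update_flip (p l) j true false hpj]
        exact ⟨l, p, h0, rfl, hprev⟩
      · have hwZ : ReachZ u (Function.update (p l) i true) := ih p h0 hprev i
        set w := Function.update (p l) i true with hw
        have hcomm : Function.update (p (l + 1)) i true = Function.update w j false := by
          rw [heqj, hw, Function.update_comm hij]
        rw [hcomm]
        refine reach_step u hwZ ?_
        have hwj : w j = true := by
          rw [hw, Function.update_of_ne hij, hpj]
        refine P0_down_pos u hwj ?_
        have hmono : ∀ k, k ≠ j → p l k ≤ w k := by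
          intro k _
          rw [hw, Function.update_apply]
          by_cases hk : k = i
          · simp [hk, Bool.le_true]
          · simp [hk]
        have hsm := hu j w (p l) hmono
        have e1 : Function.update (p l) j true = p l := by
          rw [← hpj, Function.update_eq_self]
        have e2 : Function.update (p l) j false = p (l + 1) := heqj.symm
        have e3 : Function.update w j true = w := by
          rw [← hwj, Function.update_eq_self]
        rw [e1, e2, e3] at hsm
        linarith

lemma closed (u : V → (V → Bool) → ℝ) (hu : Supermodular u) (ε : ℝ) {y x : V → Bool}
    (hy : ReachZ u y) (h : Poff u ε y x ≠ 0) : ReachZ u x := by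
  rw [Poff] at h
  by_cases hD : ∃ i, y i = true ∧ x = Function.update y i false ∧ u i x ≤ u i y
  · obtain ⟨i, hyi, hx, hle⟩ := hD
    rw [hx]
    exact reach_step u hy (P0_down_pos u hyi (hx ▸ hle))
  · rw [if_neg hD] at h
    by_cases hU : ∃ i, y i = false ∧ x = Function.update y i true ∧ u i y ≤ u i x
    · obtain ⟨i, hyi, hx, -⟩ := hU
      obtain ⟨l, p, h0, hl, hstep⟩ := hy
      rw [hx, ← hl]
      exact reach_up u hu l p h0 hstep i
    · rw [if_neg hU] at h; exact absurd rfl h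

lemma row_sum (u : V → (V → Bool) → ℝ) (ε : ℝ) (y : V → Bool) :
    ∑ x, Pkern u ε y x = 1 := by
  rw [← Finset.add_sum_erase _ _ (Finset.mem_univ y)]
  have h1 : Pkern u ε y y = 1 - ∑ x ∈ Finset.univ.filter (fun x => x ≠ y), Poff u ε y x := by
    rw [Pkern, if_pos rfl]
  have h2 : ∀ x ∈ Finset.univ.erase y, Pkern u ε y x = Poff u ε y x := by
    intro x hx
    rw [Pkern, if_neg (Finset.ne_of_mem_erase hx)]
  have h3 : Finset.univ.filter (fun x : V → Bool => x ≠ y) = Finset.univ.erase y := by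
    ext x; simp [Finset.mem_erase, and_comm]
  rw [h1, Finset.sum_congr rfl h2, h3]
  ring

end Helpers

/-- In a finite super-modular game with binary actions, for every `ε > 0` the kernel
`P^ε` satisfies the detailed balance equations `ε^{||x||₁} P^ε_{x,y} = ε^{||y||₁} P^ε_{y,x}`
for all profiles `x, y`; consequently the distribution `μ^ε_x = ε^{||x||₁}/K_ε` on the
reachable set `Z`, where `K_ε = Σ_{x∈Z} ε^{||x||₁}`, is stationary for `P^ε` restricted
to `Z`. -/
theorem detailed_balance_and_stationarity
    {V : Type*} [Fintype V] [DecidableEq V]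
    (u : V → (V → Bool) → ℝ) (hu : Supermodular u) (ε : ℝ) (hε : 0 < ε) :
    (∀ x y : V → Bool,
        ε ^ norm1 x * Pkern u ε x y = ε ^ norm1 y * Pkern u ε y x) ∧
    (∀ y : V → Bool, ReachZ u y →
        ∑ x ∈ Finset.univ.filter (fun x => ReachZ u x),
            (ε ^ norm1 x /
              ∑ x' ∈ Finset.univ.filter (fun x' => ReachZ u x'), ε ^ norm1 x') *
              Pkern u ε x y
          = ε ^ norm1 y /
              ∑ x' ∈ Finset.univ.filter (fun x' => ReachZ u x'), ε ^ norm1 x') := by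
  have hdb : ∀ x y : V → Bool,
      ε ^ norm1 x * Pkern u ε x y = ε ^ norm1 y * Pkern u ε y x := by
    intro x y
    by_cases hxy : x = y
    · subst hxy; rfl
    · rw [Pkern, if_neg (Ne.symm hxy), Pkern, if_neg hxy]
      exact db_poff u ε x y
  refine ⟨hdb, ?_⟩
  intro y hy
  set Zf := Finset.univ.filter (fun x : V → Bool => ReachZ u x) with hZf
  set K := ∑ x' ∈ Zf, ε ^ norm1 x' with hK
  have hsum : ∑ x ∈ Zf, Pkern u ε y x = 1 := by
    rw [Finset.sum_subset (Finset.subset_univ Zf) ?_, row_sum u ε y]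
    intro x _ hx
    have hxZ : ¬ ReachZ u x := by simpa [hZf] using hx
    have hne : x ≠ y := fun h => hxZ (h ▸ hy)
    rw [Pkern, if_neg hne]
    by_contra h
    exact hxZ (closed u hu ε hy h)
  calc ∑ x ∈ Zf, ε ^ norm1 x / K * Pkern u ε x y
      = ∑ x ∈ Zf, ε ^ norm1 y * Pkern u ε y x / K := by
        refine Finset.sum_congr rfl fun x _ => ?_
        rw [div_mul_eq_mul_div, hdb]
    _ = ε ^ norm1 y * (∑ x ∈ Zf, Pkern u ε y x) / K := by
        rw [← Finset.sum_div, ← Finset.mul_sum]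
    _ = ε ^ norm1 y / K := by rw [hsum, mul_one]
end

section
/- In a finite super-modular game with binary actions, for every ε > 0 the transition kernel P^ε is irreducible on the reachable set Z: for all x, y ∈ Z there exists a finite sequence z^0 = x, z^1, …, z^l = y of profiles in Z with P^ε_{z^{k−1}, z^k} > 0 for each k. -/
open Finset

open scoped Classical

section Aux

variable {V : Type*} [Fintype V] [DecidableEq V]

/-- A down-move predicate. -/
def DownMove (u : V → (V → Bool) → ℝ) (p q : V → Bool) : Prop :=
  ∃ i, p i = true ∧ q = Function.update p i false ∧ u i q ≤ u i p

lemma step_char (u : V → (V → Bool) → ℝ) (p q : V → Bool)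
    (h : 0 < Pkern u 0 p q) : q = p ∨ DownMove u p q := by
  by_cases hq : q = p
  · exact Or.inl hq
  · right
    unfold Pkern at h
    rw [if_neg hq] at h
    unfold Poff at h
    split_ifs at h with h1 h2
    · exact h1
    · norm_num at h
    · norm_num at h

lemma down_ne {u : V → (V → Bool) → ℝ} {p q : V → Bool} (h : DownMove u p q) : q ≠ p := by
  obtain ⟨i, hpi, hq, _⟩ := h
  intro he
  rw [he] at hq
  have := congrFun hq i
  rw [Function.update_self, hpi] at this
  exact Bool.noConfusion this

lemma Pkern_down_pos (u : V → (V → Bool) → ℝ) (ε : ℝ) {p q : V → Bool}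
    (h : DownMove u p q) : 0 < Pkern u ε p q := by
  have hcard : (0:ℝ) < (Fintype.card V : ℝ) := by
    obtain ⟨i, _⟩ := h
    exact_mod_cast Fintype.card_pos_iff.mpr ⟨i⟩
  unfold Pkern
  rw [if_neg (down_ne h)]
  obtain ⟨i, h1, h2, h3⟩ := h
  unfold Poff
  rw [if_pos ⟨i, h1, h2, h3⟩]
  positivity

lemma Pkern_up_pos (u : V → (V → Bool) → ℝ) {ε : ℝ} (hε : 0 < ε) {p q : V → Bool}
    (h : DownMove u p q) : 0 < Pkern u ε q p := by
  obtain ⟨i, hpi, hq, hu⟩ := h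
  have hcard : (0:ℝ) < (Fintype.card V : ℝ) := by
    exact_mod_cast Fintype.card_pos_iff.mpr ⟨i⟩
  have hqi : q i = false := by rw [hq, Function.update_self]
  have hne : p ≠ q := by
    intro he; rw [he, hqi] at hpi; exact Bool.noConfusion hpi
  have hp : p = Function.update q i true := by
    funext j
    by_cases hj : j = i
    · subst hj; rw [Function.update_self, hpi]
    · rw [Function.update_of_ne hj, hq, Function.update_of_ne hj]
  unfold Pkern
  rw [if_neg hne]
  unfold Poff
  have hnot : ¬ ∃ j, q j = true ∧ p = Function.update q j false ∧ u j p ≤ u j q := by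
    rintro ⟨j, hqj, hpj, -⟩
    by_cases hj : j = i
    · subst hj; rw [hqi] at hqj; exact Bool.noConfusion hqj
    · have : p j = false := by rw [hpj, Function.update_self]
      rw [hq, Function.update_of_ne hj] at hqj
      rw [this] at hqj
      exact Bool.noConfusion hqj
  rw [if_neg hnot, if_pos ⟨i, hqi, hp, hu⟩]
  positivity

/-- Path from x up to 𝟙 with positive P^ε steps, all in Z. -/
lemma path_up (u : V → (V → Bool) → ℝ) {ε : ℝ} (hε : 0 < ε) :
    ∀ (l : ℕ) (y : ℕ → V → Bool), y 0 = (fun _ => true) →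
    (∀ k < l, 0 < Pkern u 0 (y k) (y (k + 1))) →
    ∃ (L : ℕ) (z : ℕ → V → Bool), z 0 = y l ∧ z L = (fun _ => true) ∧
      (∀ k ≤ L, ReachZ u (z k)) ∧ ∀ k < L, 0 < Pkern u ε (z k) (z (k + 1)) := by
  intro l
  induction l with
  | zero =>
    intro y h0 _
    exact ⟨0, fun _ => y 0, rfl, by simpa using h0, fun k _ => h0 ▸ reach_one u, by omega⟩
  | succ l ih =>
    intro y h0 hstep
    obtain ⟨L, z, hz0, hzL, hzZ, hzs⟩ := ih y h0 (fun k hk => hstep k (by omega))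
    rcases step_char u _ _ (hstep l (by omega)) with heq | hdown
    · exact ⟨L, z, by rw [hz0, heq], hzL, hzZ, hzs⟩
    · refine ⟨L + 1, fun k => match k with | 0 => y (l+1) | k+1 => z k, rfl, hzL, ?_, ?_⟩
      · intro k hk
        match k with
        | 0 => exact ⟨l+1, y, h0, rfl, hstep⟩
        | k+1 => exact hzZ k (by omega)
      · intro k hk
        match k with
        | 0 =>
          show 0 < Pkern u ε (y (l+1)) (z 0)
          rw [hz0]
          exact Pkern_up_pos u hε hdown
        | k+1 => exact hzs k (by omega)

/-- Path from 𝟙 down to x with positive P^ε steps, all in Z. -/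
lemma path_down (u : V → (V → Bool) → ℝ) (ε : ℝ) :
    ∀ (l : ℕ) (y : ℕ → V → Bool), y 0 = (fun _ => true) →
    (∀ k < l, 0 < Pkern u 0 (y k) (y (k + 1))) →
    ∃ (L : ℕ) (z : ℕ → V → Bool), z 0 = (fun _ => true) ∧ z L = y l ∧
      (∀ k ≤ L, ReachZ u (z k)) ∧ ∀ k < L, 0 < Pkern u ε (z k) (z (k + 1)) := by
  intro l
  induction l with
  | zero =>
    intro y h0 _
    exact ⟨0, fun _ => y 0, by simpa using h0, rfl, fun k _ => h0 ▸ reach_one u, by omega⟩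
  | succ l ih =>
    intro y h0 hstep
    obtain ⟨L, z, hz0, hzL, hzZ, hzs⟩ := ih y h0 (fun k hk => hstep k (by omega))
    rcases step_char u _ _ (hstep l (by omega)) with heq | hdown
    · exact ⟨L, z, hz0, by rw [hzL, heq], hzZ, hzs⟩
    · refine ⟨L + 1, fun k => if k ≤ L then z k else y (l+1), by simp [hz0], ?_, ?_, ?_⟩
      · show (if L + 1 ≤ L then z (L+1) else y (l+1)) = y (l+1)
        rw [if_neg (by omega)]
      · intro k hk
        show ReachZ u (if k ≤ L then z k else y (l+1))
        by_cases h : k ≤ L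
        · rw [if_pos h]; exact hzZ k h
        · rw [if_neg h]; exact ⟨l+1, y, h0, rfl, hstep⟩
      · intro k hk
        show 0 < Pkern u ε (if k ≤ L then z k else y (l+1))
            (if k + 1 ≤ L then z (k+1) else y (l+1))
        by_cases h : k < L
        · rw [if_pos (by omega : k ≤ L), if_pos (by omega : k + 1 ≤ L)]
          exact hzs k h
        · have hkL : k = L := by omega
          subst hkL
          rw [if_pos le_rfl, if_neg (by omega), hzL]
          exact Pkern_down_pos u ε hdown

end Aux


/-- In a finite super-modular game with binary actions, for every `ε > 0` the kernel
`P^ε` is irreducible on the reachable set `Z`: any two profiles of `Z` are connected by a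
finite sequence of profiles in `Z` along which all transition probabilities are
positive. -/
theorem kernel_irreducible_on_Z
    {V : Type*} [Fintype V] [DecidableEq V]
    (u : V → (V → Bool) → ℝ) (hu : Supermodular u) (ε : ℝ) (hε : 0 < ε)
    (x y : V → Bool) (hx : ReachZ u x) (hy : ReachZ u y) :
    ∃ (l : ℕ) (z : ℕ → V → Bool),
      z 0 = x ∧ z l = y ∧ (∀ k ≤ l, ReachZ u (z k)) ∧
      ∀ k < l, 0 < Pkern u ε (z k) (z (k + 1)) := by
  obtain ⟨l1, a, ha0, hal, has⟩ := hx
  obtain ⟨l2, b, hb0, hbl, hbs⟩ := hy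
  obtain ⟨L1, z1, h10, h1L, h1Z, h1s⟩ := path_up u hε l1 a ha0 has
  obtain ⟨L2, z2, h20, h2L, h2Z, h2s⟩ := path_down u ε l2 b hb0 hbs
  refine ⟨L1 + L2, fun k => if k ≤ L1 then z1 k else z2 (k - L1), ?_, ?_, ?_, ?_⟩
  · show (if 0 ≤ L1 then z1 0 else z2 (0 - L1)) = x
    rw [if_pos (by omega), h10, hal]
  · show (if L1 + L2 ≤ L1 then z1 (L1 + L2) else z2 (L1 + L2 - L1)) = y
    by_cases h : L2 = 0
    · subst h
      rw [if_pos (by omega), Nat.add_zero, h1L, ← hbl, ← h2L, h20]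
    · rw [if_neg (by omega)]
      have : L1 + L2 - L1 = L2 := by omega
      rw [this, h2L, hbl]
  · intro k hk
    show ReachZ u (if k ≤ L1 then z1 k else z2 (k - L1))
    by_cases h : k ≤ L1
    · rw [if_pos h]; exact h1Z k h
    · rw [if_neg h]; exact h2Z (k - L1) (by omega)
  · intro k hk
    show 0 < Pkern u ε (if k ≤ L1 then z1 k else z2 (k - L1))
        (if k + 1 ≤ L1 then z1 (k+1) else z2 (k + 1 - L1))
    by_cases h : k < L1
    · rw [if_pos (by omega : k ≤ L1), if_pos (by omega : k + 1 ≤ L1)]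
      exact h1s k h
    · rw [if_neg (by omega : ¬ k + 1 ≤ L1)]
      have he : (if k ≤ L1 then z1 k else z2 (k - L1)) = z2 (k - L1) := by
        by_cases hk1 : k ≤ L1
        · have : k = L1 := by omega
          subst this
          rw [if_pos le_rfl, h1L, Nat.sub_self, h20]
        · rw [if_neg hk1]
      rw [he]
      have : k + 1 - L1 = (k - L1) + 1 := by omega
      rw [this]
      exact h2s (k - L1) (by omega)
end

section
/- In a finite super-modular game with binary actions, let μ^ε be the probability distribution on the reachable set Z defined by μ^ε_x = ε^{||x||₁} / Σ_{y∈Z} ε^{||y||₁}, where ||x||₁ = Σ_k x_k. Let A = argmin_{x∈Z} ||x||₁. Then, as ε → 0⁺, μ^ε_x converges to 1/|A| for every x ∈ A and to 0 for every x ∈ Z \ A; moreover, A coincides with the set of profiles 𝟙_S with S ⊆ V an optimal sufficient control set, so the limiting distribution is the uniform distribution on the optimal sufficient control sets. -/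
open Finset

open scoped Classical

set_option linter.unusedSectionVars false

section AuxChain
variable {α : Type*} {r : α → α → Prop}

private lemma chain_of_forall (m : ℕ) : ∀ (x : ℕ → α), (∀ k < m, r (x k) (x (k+1))) →
    Relation.ReflTransGen r (x 0) (x m) := by
  induction m with
  | zero => intro x _; exact .refl
  | succ n ih =>
    intro x hs
    exact (ih x (fun k hk => hs k (by omega))).tail (hs n (by omega))

private lemma chain_iff_rtg (a b : α) :
    (∃ (m : ℕ) (x : ℕ → α), x 0 = a ∧ x m = b ∧ ∀ k < m, r (x k) (x (k+1))) ↔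
      Relation.ReflTransGen r a b := by
  constructor
  · rintro ⟨m, x, h0, hm, hs⟩
    subst h0; subst hm
    exact chain_of_forall m x hs
  · intro h
    induction h with
    | refl => exact ⟨0, fun _ => a, rfl, rfl, by omega⟩
    | @tail b c h1 hr ih =>
      obtain ⟨m, x, h0, hm, hs⟩ := ih
      refine ⟨m + 1, fun k => if k ≤ m then x k else c, by simpa using h0, by simp, ?_⟩
      intro k hk
      rcases lt_or_eq_of_le (Nat.lt_succ_iff.mp hk) with h | h
      · simpa [Nat.le_of_lt h, Nat.succ_le_of_lt h] using hs k h
      · subst h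
        simpa [hm] using hr

end AuxChain

section AuxSteps
variable {V : Type*} [DecidableEq V] (u : V → (V → Bool) → ℝ)

/-- down step used in `ReachableFromTop` -/
private def dstep (a b : V → Bool) : Prop :=
  ∃ i, a i = true ∧ b = Function.update a i false ∧ u i b ≤ u i a

/-- improvement step by a player outside `S` -/
private def istep (S : Finset V) (a b : V → Bool) : Prop :=
  ∃ i, i ∉ S ∧ b = Function.update a i (!(a i)) ∧ u i a ≤ u i b

variable {u}

private lemma dstep_mono {a b : V → Bool} (h : Relation.ReflTransGen (dstep u) a b) :
    ∀ i, b i = true → a i = true := by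
  induction h with
  | refl => exact fun _ h => h
  | tail h1 hs ih =>
    obtain ⟨j, hj, rfl, _⟩ := hs
    intro i hi
    by_cases hij : i = j
    · subst hij; simp at hi
    · exact ih i (by simpa [Function.update_apply, hij] using hi)

private lemma dstep_rev {x : V → Bool} {S : Finset V} (hS : ∀ i ∈ S, x i = true) :
    ∀ {a b : V → Bool}, Relation.ReflTransGen (dstep u) a b →
      Relation.ReflTransGen (dstep u) b x →
      Relation.ReflTransGen (istep u S) b a := by
  intro a b h
  induction h with
  | refl => intro _; exact .refl
  | @tail b' b h1 hs ih =>
    intro hbx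
    obtain ⟨i, hb'i, hb, hui⟩ := hs
    have hbi : b i = false := by rw [hb]; simp
    have hiS : i ∉ S := by
      intro hiS
      have := dstep_mono hbx i (hS i hiS)
      rw [this] at hbi; exact Bool.noConfusion hbi
    have hb' : b' = Function.update b i (!(b i)) := by
      funext j
      by_cases hij : j = i
      · subst hij; simp [hbi, hb'i]
      · rw [hb]; simp [Function.update_apply, hij]
    have step : istep u S b b' := ⟨i, hiS, hb', hui⟩
    exact Relation.ReflTransGen.head step
      (ih (Relation.ReflTransGen.head ⟨i, hb'i, hb, hui⟩ hbx))

private lemma dstep_lift (hu : Supermodular u) (i : V) :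
    ∀ {t c : V → Bool}, Relation.ReflTransGen (dstep u) t c →
      Relation.ReflTransGen (dstep u) (Function.update t i true) (Function.update c i true) := by
  intro t c h
  induction h with
  | refl => exact .refl
  | @tail c' c h1 hs ih =>
    obtain ⟨j, hc'j, hc, huj⟩ := hs
    by_cases hji : j = i
    · subst hji
      have : Function.update c j true = Function.update c' j true := by
        rw [hc]; simp
      rw [this]; exact ih
    · refine ih.tail ⟨j, ?_, ?_, ?_⟩
      · simp [Function.update_apply, hji, hc'j]
      · rw [hc, Function.update_comm hji]
      · have key := hu j (Function.update c' i true) c' (by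
          intro k hk
          by_cases hki : k = i
          · subst hki; simp
          · simp [Function.update_apply, hki])
        have e1 : Function.update c' j true = c' := by
          funext k; by_cases hkj : k = j
          · subst hkj; simp [hc'j]
          · simp [Function.update_apply, hkj]
        have e2 : Function.update c' j false = c := by rw [hc]
        have e3 : Function.update (Function.update c' i true) j true
            = Function.update c' i true := by
          funext k; by_cases hkj : k = j
          · subst hkj; simp [Function.update_apply, hji, hc'j]
          · simp [Function.update_apply, hkj]
        have e4 : Function.update (Function.update c' i true) j false
            = Function.update c i true := by
          rw [hc, Function.update_comm hji]
        rw [e1, e2, e3, e4] at key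
        linarith

private lemma exists_top (hu : Supermodular u) {S : Finset V} :
    ∀ {a b : V → Bool}, Relation.ReflTransGen (istep u S) a b →
      ∃ t : V → Bool, (∀ i, a i ≤ t i) ∧ (∀ i, b i ≤ t i) ∧
        Relation.ReflTransGen (dstep u) t a := by
  intro a b h
  induction h using Relation.ReflTransGen.head_induction_on with
  | refl => exact ⟨b, fun _ => le_refl _, fun _ => le_refl _, .refl⟩
  | @head a c hs h ih =>
    obtain ⟨t, hct, hbt, hchain⟩ := ih
    obtain ⟨i, _, hc, hui⟩ := hs
    cases hai : a i with
    | false =>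
      have hc' : c = Function.update a i true := by rw [hc, hai]; rfl
      have hci : c i = true := by rw [hc']; simp
      have hac : ∀ j, a j ≤ c j := by
        intro j; by_cases hj : j = i
        · subst hj; rw [hai]; exact Bool.false_le _
        · rw [hc']; simp [Function.update_apply, hj]
      have ha : a = Function.update c i false := by
        funext j; by_cases hj : j = i
        · subst hj; simp [hai]
        · rw [hc']; simp [Function.update_apply, hj]
      exact ⟨t, fun j => (hac j).trans (hct j), hbt, hchain.tail ⟨i, hci, ha, hui⟩⟩
    | true =>
      have hc' : c = Function.update a i false := by rw [hc, hai]; rfl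
      have ha : a = Function.update c i true := by
        funext j; by_cases hj : j = i
        · subst hj; simp [hai]
        · rw [hc']; simp [Function.update_apply, hj]
      refine ⟨Function.update t i true, ?_, ?_, ?_⟩
      · intro j; by_cases hj : j = i
        · subst hj; simp
        · rw [ha]; simp only [Function.update_apply, if_neg hj]; exact hct j
      · intro j; by_cases hj : j = i
        · subst hj; simp
        · simp only [Function.update_apply, if_neg hj]; exact hbt j
      · rw [ha]
        exact dstep_lift hu i hchain

end AuxSteps

section AuxChar
variable {V : Type*} [Fintype V] [DecidableEq V] {u : V → (V → Bool) → ℝ}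

private lemma reach_iff {x : V → Bool} :
    ReachableFromTop u x ↔ Relation.ReflTransGen (dstep u) (fun _ => true) x := by
  rw [ReachableFromTop, ← chain_iff_rtg]
  rfl

private lemma imp_iff {S T : Finset V} :
    IsImprovementPath u S T ↔
      Relation.ReflTransGen (istep u S) (indicator S) (indicator T) := by
  rw [IsImprovementPath, ← chain_iff_rtg]
  rfl

private lemma indicator_univ : (indicator (Finset.univ : Finset V)) = fun _ => true := by
  funext i; simp [indicator]

private lemma indicator_supp (x : V → Bool) :
    indicator (Finset.univ.filter fun i => x i = true) = x := by
  funext i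
  simp only [indicator, Finset.mem_filter, Finset.mem_univ, true_and]
  cases h : x i <;> simp [h]

private lemma norm1_indicator (S : Finset V) : norm1 (indicator S) = S.card := by
  unfold norm1 indicator
  congr 1
  ext i; simp

private lemma reach_of_suff (hu : Supermodular u) {S : Finset V}
    (h : SufficientControlSet u S) : ReachableFromTop u (indicator S) := by
  rw [SufficientControlSet, imp_iff, indicator_univ] at h
  obtain ⟨t, _, hbt, hchain⟩ := exists_top hu h
  have ht : t = fun _ => true := by
    funext i
    have := hbt i
    cases h : t i
    · rw [h] at this; exact absurd this (by simp)
    · rfl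
  rw [reach_iff, ← ht]
  exact hchain

private lemma suff_of_reach {x : V → Bool} (h : ReachableFromTop u x) :
    SufficientControlSet u (Finset.univ.filter fun i => x i = true) := by
  rw [reach_iff] at h
  rw [SufficientControlSet, imp_iff, indicator_univ, indicator_supp]
  exact dstep_rev (by intro i hi; simpa using hi) h .refl

private lemma reach_top : ReachableFromTop u (fun _ => true) :=
  reach_iff.mpr .refl

end AuxChar
/-- In a finite super-modular game with binary actions, let `Z` be the reachable set,
`μ^ε_x = ε^{||x||₁} / Σ_{y∈Z} ε^{||y||₁}` the associated distribution on `Z`, and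
`A = argmin_{x∈Z} ||x||₁`.  Then, as `ε → 0⁺`, `μ^ε_x → 1/|A|` for every `x ∈ A` and
`μ^ε_x → 0` for every `x ∈ Z \ A`; moreover `A` is exactly the set of profiles `𝟙_S`
with `S` an optimal sufficient control set, so the limiting distribution is uniform on
the optimal sufficient control sets. -/
theorem stationary_distribution_concentrates_on_optimal
    {V : Type*} [Fintype V] [DecidableEq V]
    (u : V → (V → Bool) → ℝ) (hu : Supermodular u)
    (Zfin Afin : Finset (V → Bool))
    (hZ : Zfin = Finset.univ.filter (fun x => ReachableFromTop u x))
    (hA : Afin = Zfin.filter (fun x => ∀ y ∈ Zfin, norm1 x ≤ norm1 y))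
    (μ : ℝ → (V → Bool) → ℝ)
    (hμ : ∀ ε x, μ ε x = ε ^ norm1 x / ∑ y ∈ Zfin, ε ^ norm1 y) :
    (∀ x ∈ Afin,
        Filter.Tendsto (fun ε => μ ε x) (nhdsWithin 0 (Set.Ioi (0 : ℝ)))
          (nhds (1 / (Afin.card : ℝ)))) ∧
    (∀ x ∈ Zfin \ Afin,
        Filter.Tendsto (fun ε => μ ε x) (nhdsWithin 0 (Set.Ioi (0 : ℝ))) (nhds 0)) ∧
    (∀ x : V → Bool, x ∈ Afin ↔
        ∃ S : Finset V, x = indicator S ∧ SufficientControlSet u S ∧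
          ∀ T : Finset V, SufficientControlSet u T → S.card ≤ T.card) := by
  have hZmem : ∀ y, y ∈ Zfin ↔ ReachableFromTop u y := by
    intro y; rw [hZ]; simp
  have hZne : Zfin.Nonempty := ⟨_, (hZmem _).mpr reach_top⟩
  obtain ⟨z, hz, hzmin⟩ := Zfin.exists_min_image norm1 hZne
  set N := norm1 z with hN
  have hAmem : ∀ y, y ∈ Afin ↔ y ∈ Zfin ∧ ∀ w ∈ Zfin, norm1 y ≤ norm1 w := by
    intro y; rw [hA]; simp
  have hAmem' : ∀ y, y ∈ Afin ↔ y ∈ Zfin ∧ norm1 y = N := by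
    intro y
    rw [hAmem]
    constructor
    · rintro ⟨h1, h2⟩
      exact ⟨h1, le_antisymm (h2 z hz) (hzmin y h1)⟩
    · rintro ⟨h1, h2⟩
      exact ⟨h1, fun w hw => h2 ▸ hzmin w hw⟩
  have hAz : z ∈ Afin := (hAmem' z).mpr ⟨hz, rfl⟩
  have hAne : Afin.Nonempty := ⟨z, hAz⟩
  -- part 3 : characterization
  have part3 : ∀ x : V → Bool, x ∈ Afin ↔
      ∃ S : Finset V, x = indicator S ∧ SufficientControlSet u S ∧
        ∀ T : Finset V, SufficientControlSet u T → S.card ≤ T.card := by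
    intro x
    constructor
    · intro hx
      obtain ⟨hxZ, hxmin⟩ := (hAmem x).mp hx
      refine ⟨Finset.univ.filter fun i => x i = true, (indicator_supp x).symm,
        suff_of_reach ((hZmem x).mp hxZ), ?_⟩
      intro T hT
      have hTZ : indicator T ∈ Zfin := (hZmem _).mpr (reach_of_suff hu hT)
      have := hxmin _ hTZ
      rwa [norm1_indicator] at this
    · rintro ⟨S, rfl, hsuff, hopt⟩
      have hxZ : indicator S ∈ Zfin := (hZmem _).mpr (reach_of_suff hu hsuff)
      refine (hAmem _).mpr ⟨hxZ, ?_⟩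
      intro w hw
      have hwsuff := suff_of_reach ((hZmem w).mp hw)
      have := hopt _ hwsuff
      rw [norm1_indicator]
      exact this.trans_eq rfl
    -- note : card of filter = norm1 w by definition
  -- analytic part
  set g : ℝ → ℝ := fun ε => ∑ y ∈ Zfin, ε ^ (norm1 y - N) with hg
  have hgcont : Continuous g := by
    apply continuous_finset_sum
    intro y _
    exact continuous_pow _
  have hAfilter : Afin = Zfin.filter fun y => norm1 y = N := by
    ext y; rw [hAmem', Finset.mem_filter]
  have hg0 : g 0 = (Afin.card : ℝ) := by
    rw [hg]
    simp only
    rw [show (∑ y ∈ Zfin, (0:ℝ) ^ (norm1 y - N))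
        = ∑ y ∈ Zfin, (if norm1 y = N then (1:ℝ) else 0) from
      Finset.sum_congr rfl fun y hy => by
        have hNy := hzmin y hy
        by_cases h : norm1 y = N
        · rw [if_pos h, show norm1 y - N = 0 by omega, pow_zero]
        · rw [if_neg h, zero_pow (by omega)]]
    rw [Finset.sum_boole, ← hAfilter]
  have hgne : g 0 ≠ 0 := by
    rw [hg0]
    exact_mod_cast Nat.cast_ne_zero.mpr (Finset.card_ne_zero_of_mem hAz)
  have key : ∀ d : ℕ, Filter.Tendsto (fun ε : ℝ => ε ^ d / g ε)
      (nhdsWithin 0 (Set.Ioi (0:ℝ))) (nhds ((0:ℝ) ^ d / g 0)) := by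
    intro d
    exact (((continuous_pow d).continuousAt).div hgcont.continuousAt hgne).tendsto.mono_left
      nhdsWithin_le_nhds
  have heq : ∀ x ∈ Zfin, ∀ᶠ ε in nhdsWithin (0:ℝ) (Set.Ioi (0:ℝ)),
      ε ^ (norm1 x - N) / g ε = μ ε x := by
    intro x hx
    filter_upwards [self_mem_nhdsWithin] with ε hε
    have hε0 : (0:ℝ) < ε := hε
    have hεN : ε ^ N ≠ 0 := pow_ne_zero _ (ne_of_gt hε0)
    have hsum : ∑ y ∈ Zfin, ε ^ norm1 y = ε ^ N * g ε := by
      rw [hg]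
      simp only
      rw [Finset.mul_sum]
      refine Finset.sum_congr rfl fun y hy => ?_
      rw [← pow_add]
      congr 1
      have := hzmin y hy
      omega
    have hnum : ε ^ norm1 x = ε ^ N * ε ^ (norm1 x - N) := by
      rw [← pow_add]
      congr 1
      have := hzmin x hx
      omega
    rw [hμ, hsum, hnum, mul_div_mul_left _ _ hεN]
  refine ⟨?_, ?_, part3⟩
  · intro x hx
    obtain ⟨hxZ, hxN⟩ := (hAmem' x).mp hx
    have := (key (norm1 x - N)).congr' (heq x hxZ)
    rw [show norm1 x - N = 0 by omega, pow_zero] at this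
    rwa [hg0] at this
  · intro x hx
    rw [Finset.mem_sdiff] at hx
    obtain ⟨hxZ, hxA⟩ := hx
    have hxN : norm1 x ≠ N := fun h => hxA ((hAmem' x).mpr ⟨hxZ, h⟩)
    have hNx := hzmin x hxZ
    have := (key (norm1 x - N)).congr' (heq x hxZ)
    rwa [zero_pow (by omega), zero_div] at this
end
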